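/- arXiv:1606.01835 — 5 statements merged into one kernel-verified Lean document; each statement's English description precedes it below -/
import Mathlib

section
/- Fix d ≥ 1, m ≥ 1, an integer k ≥ 1, n = km, and β > 0. If the i.i.d. environment variables have a finite exponential moment 𝔼[exp(β ω(1,0))] < ∞, then for every endpoint y ∈ ℤ^d the point-to-point polymer partition function is dominated by the point-to-point m-tree partition function in the Laplace transform order: for every λ ≥ 0, 𝔼[exp(−λ Z_n^pol(y))] ≥ 𝔼[exp(−λ Z_n^{m-tree}(y))]. -/
open MeasureTheory ProbabilityTheory Real Finset

noncomputable section

/-- A nearest-neighbour step of the simple random walk on `ℤ^d`, encoded by a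
coordinate direction and a sign. -/
def step (d : ℕ) (s : Fin d × Bool) : Fin d → ℤ :=
  fun j => if j = s.1 then (if s.2 then 1 else -1) else 0

/-- Position after `i` steps of the nearest-neighbour path (started at the origin)
with step sequence `s`.  Nearest-neighbour paths in `Π_n` (starting at `0`) are
identified with their step sequences `s : Fin n → Fin d × Bool`. -/
def pos {d n : ℕ} (s : Fin n → Fin d × Bool) (i : ℕ) : Fin d → ℤ :=
  ∑ j ∈ Finset.univ.filter (fun j : Fin n => (j : ℕ) < i), step d (s j)

/-- The polymer energy `H_n(x) = ∑_{i=1}^n ω(i, x_i)`. -/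
def polymerEnergy {Ω : Type*} {d : ℕ} (n : ℕ) (env : ℕ × (Fin d → ℤ) → Ω → ℝ)
    (s : Fin n → Fin d × Bool) (o : Ω) : ℝ :=
  ∑ i ∈ Finset.range n, env (i + 1, pos s (i + 1)) o

/-- The `(x_m, x_{2m}, …, x_{lm})` word indexing the environment block used by the
path `s` in the `l`-th block of the `m`-tree. -/
def treeWord {d n : ℕ} (m : ℕ) (s : Fin n → Fin d × Bool) (l : ℕ) : List (Fin d → ℤ) :=
  List.ofFn (fun r : Fin l => pos s ((r + 1) * m))

/-- The `m`-tree energy `H_n^{m-tree}(x)`, for `n = k m`: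
`∑_{l=0}^{k-1} ∑_{j=1}^{m} ω^{(x_m, …, x_{lm})}(j, x_{lm+j} − x_{lm})`. -/
def treeEnergy {Ω : Type*} {d : ℕ} (n m k : ℕ)
    (envT : List (Fin d → ℤ) × ℕ × (Fin d → ℤ) → Ω → ℝ)
    (s : Fin n → Fin d × Bool) (o : Ω) : ℝ :=
  ∑ l ∈ Finset.range k, ∑ j ∈ Finset.range m,
    envT (treeWord m s l, (j + 1, pos s (l * m + (j + 1)) - pos s (l * m))) o

/-- An i.i.d. family with common law `ν`: measurable, jointly independent,
identically distributed. -/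
def IID {Ω ι : Type*} [MeasurableSpace Ω] (μ : Measure Ω) (f : ι → Ω → ℝ) (ν : Measure ℝ) : Prop :=
  (∀ i, Measurable (f i)) ∧ iIndepFun f μ ∧ ∀ i, Measure.map (f i) μ = ν

/-- The point-to-point partition function
`Z_n^{pol}(y) = (2d)^{-n} ∑_{x ∈ Π_n, x_n = y} e^{β H_n(x)}`. -/
def ZpolPP {Ω : Type*} {d : ℕ} (n : ℕ) (β : ℝ) (env : ℕ × (Fin d → ℤ) → Ω → ℝ)
    (y : Fin d → ℤ) (o : Ω) : ℝ :=
  (2 * d : ℝ)⁻¹ ^ n *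
    ∑ s ∈ Finset.univ.filter (fun s : Fin n → Fin d × Bool => pos s n = y),
      Real.exp (β * polymerEnergy n env s o)

/-- The point-to-point `m`-tree partition function `Z_n^{m-tree}(y)`. -/
def ZtreePP {Ω : Type*} {d : ℕ} (n m k : ℕ) (β : ℝ)
    (envT : List (Fin d → ℤ) × ℕ × (Fin d → ℤ) → Ω → ℝ) (y : Fin d → ℤ) (o : Ω) : ℝ :=
  (2 * d : ℝ)⁻¹ ^ n *
    ∑ s ∈ Finset.univ.filter (fun s : Fin n → Fin d × Bool => pos s n = y),
      Real.exp (β * treeEnergy n m k envT s o)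

/-!
Induction on the number `k` of blocks, after transferring both sides to the canonical product
space of the environment; write `L_k(w, s) = 𝔼[exp(-s Z_{km}(w))]` for either model. Cutting
the paths at time `m` gives `Z_{m + km}(y) = ∑_z A_z B_z`, where `A_z` is the partition function
of the first block from `0` to `z` (the same functional of the first-block environment for the
polymer and for the tree) and `B_z` that of the continuation from `z` to `y`. The first block is
independent of what comes after, so both sides are averages over the first block of
`𝔼[∏_z exp(-λ A_z B_z)]` with the `A_z` frozen. For the tree the `B_z` live on disjoint subtrees,
hence are independent, and this factorizes into `∏_z L^tree_k(y - z, λ A_z)`. For the polymer the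
`B_z` are increasing functions of one common environment, so Harris' inequality bounds it below
by `∏_z L^pol_k(y - z, λ A_z)`, which dominates the tree product by induction.
-/

open Function

section UnitInterval

variable {α : Type*} [MeasurableSpace α] {μ : Measure α}

lemma integrable_of_mem_unitInterval [IsFiniteMeasure μ] {f : α → ℝ} (hm : Measurable f)
    (hf : ∀ x, f x ∈ unitInterval) : Integrable f μ :=
  Integrable.of_bound hm.aestronglyMeasurable 1 <| ae_of_all _ fun x => by
    rw [Real.norm_eq_abs, abs_le]; exact ⟨by linarith [(hf x).1], (hf x).2⟩

lemma integral_mem_unitInterval [IsProbabilityMeasure μ] {f : α → ℝ} (hm : Measurable f)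
    (hf : ∀ x, f x ∈ unitInterval) : ∫ x, f x ∂μ ∈ unitInterval :=
  ⟨integral_nonneg fun x => (hf x).1, by
    simpa using integral_mono (integrable_of_mem_unitInterval (μ := μ) hm hf) (integrable_const 1)
      fun x => (hf x).2⟩

lemma exp_neg_mul_mem_unitInterval {t z : ℝ} (ht : 0 ≤ t) (hz : 0 ≤ z) :
    Real.exp (-t * z) ∈ unitInterval :=
  ⟨(Real.exp_pos _).le, Real.exp_le_one_iff.2 (by nlinarith)⟩

end UnitInterval

section Harris

def HasHarrisInequality {α : Type*} [MeasurableSpace α] [Preorder α] (μ : Measure α) : Prop :=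
  ∀ f g : α → ℝ, Measurable f → Measurable g → Antitone f → Antitone g →
    (∀ x, f x ∈ unitInterval) → (∀ x, g x ∈ unitInterval) →
    (∫ x, f x ∂μ) * ∫ x, g x ∂μ ≤ ∫ x, f x * g x ∂μ

variable {α β : Type*} [MeasurableSpace α] [MeasurableSpace β]

lemma hasHarrisInequality_of_linearOrder [LinearOrder α] (μ : Measure α)
    [IsProbabilityMeasure μ] : HasHarrisInequality μ := by
  intro f g hfm hgm hfa hga hf hg
  have hfi : Integrable f μ := integrable_of_mem_unitInterval hfm hf
  have hgi : Integrable g μ := integrable_of_mem_unitInterval hgm hg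
  have hfgi : Integrable (fun x => f x * g x) μ :=
    integrable_of_mem_unitInterval (hfm.mul hgm) fun x => unitInterval.mul_mem (hf x) (hg x)
  have hpair : ∀ x y, 0 ≤ (f x - f y) * (g x - g y) := by
    intro x y
    rcases le_total x y with h | h
    · exact mul_nonneg (by linarith [hfa h]) (by linarith [hga h])
    · exact mul_nonneg_of_nonpos_of_nonpos (by linarith [hfa h]) (by linarith [hga h])
  have hdouble : 0 ≤ ∫ y, ∫ x, (f x - f y) * (g x - g y) ∂μ ∂μ :=
    integral_nonneg fun y => integral_nonneg fun x => hpair x y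
  -- expanded, `hdouble` reads `0 ≤ 2 * (∫ f g - ∫ f * ∫ g)`
  simp_rw [sub_mul, mul_sub] at hdouble
  simp (disch := fun_prop) only [integral_sub, integral_const_mul, integral_mul_const,
    integral_const, probReal_univ, smul_eq_mul, one_mul] at hdouble
  nlinarith

lemma HasHarrisInequality.prod [Preorder α] [Preorder β] {μ : Measure α} {ν : Measure β}
    [IsProbabilityMeasure μ] [IsProbabilityMeasure ν] (hμ : HasHarrisInequality μ)
    (hν : HasHarrisInequality ν) : HasHarrisInequality (μ.prod ν) := by
  intro f g hfm hgm hfa hga hf hg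
  have hsec : ∀ {h : α × β → ℝ}, Measurable h → ∀ a, Measurable fun b => h (a, b) :=
    fun hm _ => hm.comp measurable_prodMk_left
  have hmarg : ∀ {h : α × β → ℝ}, Measurable h → Measurable fun a => ∫ b, h (a, b) ∂ν :=
    fun hm => (hm.stronglyMeasurable.integral_prod_right').measurable
  have hmarg_mem : ∀ {h : α × β → ℝ}, Measurable h → (∀ p, h p ∈ unitInterval) →
      ∀ a, ∫ b, h (a, b) ∂ν ∈ unitInterval :=
    fun hm hI a => integral_mem_unitInterval (hsec hm a) fun b => hI (a, b)
  have hmarg_anti : ∀ {h : α × β → ℝ}, Measurable h → Antitone h → (∀ p, h p ∈ unitInterval) →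
      Antitone fun a => ∫ b, h (a, b) ∂ν :=
    fun hm ha hI a a' haa' => integral_mono (integrable_of_mem_unitInterval (hsec hm a')
      fun b => hI (a', b)) (integrable_of_mem_unitInterval (hsec hm a) fun b => hI (a, b))
      fun b => ha (Prod.mk_le_mk.2 ⟨haa', le_rfl⟩)
  have hfg : ∀ p, f p * g p ∈ unitInterval := fun p => unitInterval.mul_mem (hf p) (hg p)
  rw [integral_prod _ (integrable_of_mem_unitInterval hfm hf),
    integral_prod _ (integrable_of_mem_unitInterval hgm hg),
    integral_prod (fun p => f p * g p) (integrable_of_mem_unitInterval (hfm.mul hgm) hfg)]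
  refine (hμ _ _ (hmarg hfm) (hmarg hgm) (hmarg_anti hfm hfa hf) (hmarg_anti hgm hga hg)
    (hmarg_mem hfm hf) (hmarg_mem hgm hg)).trans (integral_mono ?_ ?_ fun a => ?_)
  · exact integrable_of_mem_unitInterval ((hmarg hfm).mul (hmarg hgm))
      fun a => unitInterval.mul_mem (hmarg_mem hfm hf a) (hmarg_mem hgm hg a)
  · exact integrable_of_mem_unitInterval (hmarg (hfm.mul hgm)) (hmarg_mem (hfm.mul hgm) hfg)
  · exact hν _ _ (hsec hfm a) (hsec hgm a) (fun b b' hb => hfa (Prod.mk_le_mk.2 ⟨le_rfl, hb⟩))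
      (fun b b' hb => hga (Prod.mk_le_mk.2 ⟨le_rfl, hb⟩)) (fun b => hf (a, b)) fun b => hg (a, b)

lemma HasHarrisInequality.of_measurePreserving [Preorder α] [Preorder β] {μ : Measure α}
    {ν : Measure β} (h : HasHarrisInequality μ) (e : α ≃ᵐ β) (he : MeasurePreserving e μ ν)
    (hmono : Monotone e) : HasHarrisInequality ν := by
  intro f g hfm hgm hfa hga hf hg
  have hcomp : ∀ F : β → ℝ, ∫ x, F (e x) ∂μ = ∫ y, F y ∂ν :=
    fun F => he.integral_comp e.measurableEmbedding F
  have := h (f ∘ e) (g ∘ e) (hfm.comp e.measurable) (hgm.comp e.measurable)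
    (hfa.comp_monotone hmono) (hga.comp_monotone hmono) (fun x => hf (e x)) fun x => hg (e x)
  rwa [Function.comp_def, Function.comp_def, hcomp, hcomp, hcomp (fun y => f y * g y)] at this

lemma hasHarrisInequality_pi_fin [LinearOrder α] :
    ∀ (n : ℕ) (μ : Fin n → Measure α) [∀ i, IsProbabilityMeasure (μ i)],
      HasHarrisInequality (Measure.pi μ)
  | 0, μ, _ => by
    intro f g _ _ _ _ _ _
    have hconst : ∀ F : (Fin 0 → α) → ℝ, F = fun _ => F default :=
      fun F => funext fun x => congrArg F (Subsingleton.elim x default)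
    rw [hconst f, hconst g]
    simp
  | n + 1, μ, _ => by
    refine ((hasHarrisInequality_of_linearOrder (μ 0)).prod
      (hasHarrisInequality_pi_fin n fun i => μ i.succ)).of_measurePreserving
      (MeasurableEquiv.piFinSuccAbove (fun _ => α) 0).symm
      (measurePreserving_piFinSuccAbove μ 0).symm fun p q hpq j => ?_
    refine Fin.cases ?_ (fun i => ?_) j
    · simpa [MeasurableEquiv.piFinSuccAbove_symm_apply] using hpq.1
    · simpa [MeasurableEquiv.piFinSuccAbove_symm_apply] using hpq.2 i

lemma hasHarrisInequality_pi [LinearOrder α] {ι : Type*} [Fintype ι] (μ : ι → Measure α)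
    [∀ i, IsProbabilityMeasure (μ i)] : HasHarrisInequality (Measure.pi μ) := by
  classical
  let e := Fintype.equivFin ι
  refine (hasHarrisInequality_pi_fin _ fun j => μ (e.symm j)).of_measurePreserving
    (MeasurableEquiv.piCongrLeft (fun _ => α) e.symm)
    (measurePreserving_piCongrLeft μ e.symm) fun p q hpq i => ?_
  rw [← e.symm_apply_apply i, MeasurableEquiv.piCongrLeft_apply_apply,
    MeasurableEquiv.piCongrLeft_apply_apply]
  exact hpq _

lemma HasHarrisInequality.prod_integral_le_integral_prod [Preorder α] {μ : Measure α}
    [IsProbabilityMeasure μ] (h : HasHarrisInequality μ) {γ : Type*} (P : Finset γ)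
    (f : γ → α → ℝ) (hm : ∀ z ∈ P, Measurable (f z)) (ha : ∀ z ∈ P, Antitone (f z))
    (hf : ∀ z ∈ P, ∀ x, f z x ∈ unitInterval) :
    ∏ z ∈ P, ∫ x, f z x ∂μ ≤ ∫ x, ∏ z ∈ P, f z x ∂μ := by
  induction P using Finset.cons_induction with
  | empty => simp
  | cons z P hz ih =>
    simp only [Finset.forall_mem_cons] at hm ha hf
    simp only [Finset.prod_cons]
    calc (∫ x, f z x ∂μ) * ∏ z ∈ P, ∫ x, f z x ∂μ
        ≤ (∫ x, f z x ∂μ) * ∫ x, ∏ z ∈ P, f z x ∂μ :=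
          mul_le_mul_of_nonneg_left (ih hm.2 ha.2 hf.2) (integral_nonneg fun x => (hf.1 x).1)
      _ ≤ ∫ x, f z x * ∏ z ∈ P, f z x ∂μ :=
          h _ _ hm.1 (Finset.measurable_prod _ hm.2) ha.1
            (fun x x' hx => Finset.prod_le_prod (fun w hw => (hf.2 w hw x').1)
              fun w hw => ha.2 w hw hx)
            hf.1 fun x => unitInterval.prod_mem fun w hw => hf.2 w hw x

end Harris

lemma ProbabilityTheory.IndepFun.integral_comp_eq_integral_integral {Ω β γ : Type*}
    [MeasurableSpace Ω] [MeasurableSpace β] [MeasurableSpace γ] {μ : Measure Ω} [IsFiniteMeasure μ]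
    {U : Ω → β} {V : Ω → γ} (hUV : IndepFun U V μ) (hU : Measurable U) (hV : Measurable V)
    {F : β → γ → ℝ} (hFm : Measurable (uncurry F))
    (hFi : Integrable (uncurry F) ((μ.map U).prod (μ.map V))) :
    ∫ o, F (U o) (V o) ∂μ = ∫ o, ∫ o', F (U o) (V o') ∂μ ∂μ := by
  have hjoint : μ.map (fun o => (U o, V o)) = (μ.map U).prod (μ.map V) :=
    hUV.map_prod_eq_prod_map_map hU.aemeasurable hV.aemeasurable
  have hinner : ∀ b, ∫ c, F b c ∂(μ.map V) = ∫ o', F b (V o') ∂μ := fun b =>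
    integral_map hV.aemeasurable (hFm.comp measurable_prodMk_left).aestronglyMeasurable
  calc ∫ o, F (U o) (V o) ∂μ = ∫ p, uncurry F p ∂(μ.map fun o => (U o, V o)) :=
        (integral_map (hU.prodMk hV).aemeasurable hFm.aestronglyMeasurable).symm
    _ = ∫ b, ∫ c, F b c ∂(μ.map V) ∂(μ.map U) := by rw [hjoint, integral_prod _ hFi]; rfl
    _ = ∫ b, ∫ o', F b (V o') ∂μ ∂(μ.map U) := by simp_rw [hinner]
    _ = ∫ o, ∫ o', F (U o) (V o') ∂μ ∂μ := integral_map hU.aemeasurable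
        (hFi.integral_prod_left.aestronglyMeasurable.congr (ae_of_all _ hinner))

lemma apply_updateFinset_restrict_of_dependsOn {ι β : Type*} {X : ι → Type*} [DecidableEq ι]
    {f : (Π i, X i) → β} {S : Finset ι} (hf : DependsOn f S) (x₀ x : Π i, X i) :
    f (updateFinset x₀ S (S.restrict x)) = f x :=
  hf fun i hi => by simp [updateFinset, Finset.mem_coe.1 hi]

section InfinitePi

variable {ι : Type*} {X : ι → Type*} [∀ i, MeasurableSpace (X i)] (μ : ∀ i, Measure (X i))
  [∀ i, IsProbabilityMeasure (μ i)]

lemma integral_infinitePi_of_dependsOn [DecidableEq ι] {f : (Π i, X i) → ℝ} {S : Finset ι}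
    (hf : DependsOn f S) (hfm : Measurable f) (x₀ : Π i, X i) :
    ∫ x, f x ∂Measure.infinitePi μ = ∫ y, f (updateFinset x₀ S y) ∂Measure.pi fun i : S => μ i := by
  rw [← integral_restrict_infinitePi μ (f := fun y => f (updateFinset x₀ S y))
    (hfm.comp measurable_updateFinset).aestronglyMeasurable]
  exact integral_congr_ae <| ae_of_all _ fun x =>
    (apply_updateFinset_restrict_of_dependsOn hf x₀ x).symm

lemma indepFun_infinitePi_of_dependsOn {β γ : Type*} [MeasurableSpace β] [MeasurableSpace γ]
    {f : (Π i, X i) → β} {g : (Π i, X i) → γ} {S T : Finset ι} (hST : Disjoint S T)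
    (hf : DependsOn f S) (hg : DependsOn g T) (hfm : Measurable f) (hgm : Measurable g) :
    IndepFun f g (Measure.infinitePi μ) := by
  classical
  obtain ⟨x₀⟩ := nonempty_of_isProbabilityMeasure (Measure.infinitePi μ)
  have hrestrict : IndepFun S.restrict T.restrict (Measure.infinitePi μ) :=
    (iIndepFun_infinitePi (X := fun _ => id) fun _ => measurable_id).indepFun_finset S T hST
      fun _ => measurable_pi_apply _
  have h := hrestrict.comp (hfm.comp (measurable_updateFinset (x := x₀)))
    (hgm.comp (measurable_updateFinset (x := x₀)))
  rwa [show (f ∘ updateFinset x₀ S) ∘ S.restrict = f from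
      funext (apply_updateFinset_restrict_of_dependsOn hf x₀),
    show (g ∘ updateFinset x₀ T) ∘ T.restrict = g from
      funext (apply_updateFinset_restrict_of_dependsOn hg x₀)] at h

lemma integral_infinitePi_eq_integral_integral_of_dependsOn {F : (Π i, X i) → (Π i, X i) → ℝ}
    {S T : Finset ι} (hST : Disjoint S T) (hS : ∀ x', DependsOn (F · x') S)
    (hT : ∀ x, DependsOn (F x) T) (hFm : Measurable (uncurry F))
    (hF : ∀ x x', F x x' ∈ unitInterval) :
    ∫ x, F x x ∂Measure.infinitePi μ
      = ∫ x, ∫ x', F x x' ∂Measure.infinitePi μ ∂Measure.infinitePi μ := by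
  classical
  obtain ⟨x₀⟩ := nonempty_of_isProbabilityMeasure (Measure.infinitePi μ)
  set P : Finset ι → (Π i, X i) → Π i, X i := fun R x => updateFinset x₀ R (R.restrict x)
  have hPm : ∀ R, Measurable (P R) := fun R => measurable_updateFinset.comp R.measurable_restrict
  have hPdep : ∀ R, DependsOn (P R) R := fun R _ _ h =>
    congrArg (updateFinset x₀ R) (Finset.dependsOn_restrict R h)
  have hFP : ∀ x x', F (P S x) (P T x') = F x x' := fun x x' =>
    (apply_updateFinset_restrict_of_dependsOn (hS _) x₀ x).trans
      (apply_updateFinset_restrict_of_dependsOn (hT x) x₀ x')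
  have hfreeze := (indepFun_infinitePi_of_dependsOn μ hST (hPdep S) (hPdep T) (hPm S)
    (hPm T)).integral_comp_eq_integral_integral (hPm S) (hPm T) hFm
    (integrable_of_mem_unitInterval hFm fun p => hF p.1 p.2)
  simpa only [hFP] using hfreeze

lemma integral_finset_prod_infinitePi_of_dependsOn {γ : Type*} (P : Finset γ)
    (T : γ → Finset ι) (hT : (P : Set γ).PairwiseDisjoint T) (f : γ → (Π i, X i) → ℝ)
    (hf : ∀ z ∈ P, DependsOn (f z) (T z)) (hfm : ∀ z ∈ P, Measurable (f z)) :
    ∫ x, ∏ z ∈ P, f z x ∂Measure.infinitePi μ = ∏ z ∈ P, ∫ x, f z x ∂Measure.infinitePi μ := by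
  classical
  induction P using Finset.cons_induction with
  | empty => simp
  | cons z P hz ih =>
    simp only [Finset.forall_mem_cons] at hf hfm
    rw [Finset.coe_cons] at hT
    have hdisj : Disjoint (T z) (P.biUnion T) := (Finset.disjoint_biUnion_right _ _ _).2 fun w hw =>
      hT (Set.mem_insert _ _) (Set.mem_insert_of_mem _ hw) fun h => hz (h ▸ hw)
    have hrest : DependsOn (fun x => ∏ w ∈ P, f w x) (P.biUnion T) := fun x y hxy =>
      Finset.prod_congr rfl fun w hw =>
        hf.2 w hw fun i hi => hxy i (Finset.mem_biUnion.2 ⟨w, hw, hi⟩)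
    simp only [Finset.prod_cons]
    rw [← ih (hT.subset (Set.subset_insert _ _)) hf.2 hfm.2]
    exact (indepFun_infinitePi_of_dependsOn μ hdisj hf.1 hrest hfm.1
      (Finset.measurable_prod _ hfm.2)).integral_mul_eq_mul_integral
      hfm.1.aestronglyMeasurable (Finset.measurable_prod _ hfm.2).aestronglyMeasurable

lemma integral_comp_infinitePi_of_injective {κ : Type*} {u : κ → ι} (hu : Injective u)
    {f : (Π j, X (u j)) → ℝ} (hfm : Measurable f) :
    ∫ x, f (fun j => x (u j)) ∂Measure.infinitePi μ
      = ∫ x, f x ∂Measure.infinitePi fun j => μ (u j) := by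
  rw [← Measure.map_infinitePi_infinitePi_of_inj hu,
    integral_map (measurable_pi_lambda _ fun j => measurable_pi_apply (u j)).aemeasurable
      hfm.aestronglyMeasurable]

lemma prod_integral_le_integral_prod_infinitePi {α : Type*} [LinearOrder α] [MeasurableSpace α]
    (μ : ι → Measure α) [∀ i, IsProbabilityMeasure (μ i)] {γ : Type*} (P : Finset γ)
    {S : Finset ι} (f : γ → (ι → α) → ℝ) (hf : ∀ z ∈ P, DependsOn (f z) S)
    (hfm : ∀ z ∈ P, Measurable (f z)) (hfa : ∀ z ∈ P, Antitone (f z))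
    (hfI : ∀ z ∈ P, ∀ x, f z x ∈ unitInterval) :
    ∏ z ∈ P, ∫ x, f z x ∂Measure.infinitePi μ ≤ ∫ x, ∏ z ∈ P, f z x ∂Measure.infinitePi μ := by
  classical
  obtain ⟨x₀⟩ := nonempty_of_isProbabilityMeasure (Measure.infinitePi μ)
  have hupd : Monotone (updateFinset x₀ S) := fun y y' hy i => by
    by_cases hi : i ∈ S
    · simpa [updateFinset, hi] using hy ⟨i, hi⟩
    · simp [updateFinset, hi]
  rw [integral_infinitePi_of_dependsOn μ (fun x y hxy => Finset.prod_congr rfl fun z hz =>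
      hf z hz hxy) (Finset.measurable_prod _ hfm) x₀,
    Finset.prod_congr rfl fun z hz => integral_infinitePi_of_dependsOn μ (hf z hz) (hfm z hz) x₀]
  exact (hasHarrisInequality_pi _).prod_integral_le_integral_prod P _
    (fun z hz => (hfm z hz).comp measurable_updateFinset)
    (fun z hz => (hfa z hz).comp_monotone hupd) fun z hz x => hfI z hz _

end InfinitePi

lemma IID.integral_comp_eq_integral_infinitePi {Ω J : Type*} [MeasurableSpace Ω]
    {μ : Measure Ω} {X : J → Ω → ℝ} {ν : Measure ℝ} [IsProbabilityMeasure ν] (h : IID μ X ν)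
    {f : (J → ℝ) → ℝ} (hfm : Measurable f) :
    ∫ o, f (fun j => X j o) ∂μ = ∫ x, f x ∂Measure.infinitePi fun _ : J => ν := by
  obtain ⟨hXm, hind, hlaw⟩ := h
  rw [← integral_map (measurable_pi_lambda _ hXm).aemeasurable hfm.aestronglyMeasurable,
    hind.map_fun_eq_infinitePi_map hXm]
  simp_rw [hlaw]

section Paths

variable {d : ℕ}

lemma pos_eq_sum_ite {n : ℕ} (s : Fin n → Fin d × Bool) (i : ℕ) :
    pos s i = ∑ j : Fin n, if (j : ℕ) < i then step d (s j) else 0 :=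
  Finset.sum_filter _ _

lemma pos_zero {n : ℕ} (s : Fin n → Fin d × Bool) : pos s 0 = 0 := by
  simp [pos]

lemma pos_append_of_le {p q : ℕ} (a : Fin p → Fin d × Bool) (b : Fin q → Fin d × Bool)
    {i : ℕ} (hi : i ≤ p) : pos (Fin.append a b) i = pos a i := by
  rw [pos_eq_sum_ite, pos_eq_sum_ite, Fin.sum_univ_add]
  have hright : ∀ j : Fin q, (if ((Fin.natAdd p j : Fin (p + q)) : ℕ) < i then
      step d (Fin.append a b (Fin.natAdd p j)) else 0) = 0 :=
    fun j => if_neg (by rw [Fin.val_natAdd]; omega)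
  simp only [hright, Finset.sum_const_zero, add_zero, Fin.append_left, Fin.val_castAdd]

lemma pos_append_add {p q : ℕ} (a : Fin p → Fin d × Bool) (b : Fin q → Fin d × Bool)
    (i : ℕ) : pos (Fin.append a b) (p + i) = pos a p + pos b i := by
  rw [pos_eq_sum_ite, Fin.sum_univ_add, pos_eq_sum_ite a, pos_eq_sum_ite b]
  congr 1 <;> refine Finset.sum_congr rfl fun j _ => ?_
  · simp [Fin.append_left, j.2, show (j : ℕ) < p + i by omega]
  · simp [Fin.append_right]

def endpoints (d n : ℕ) : Finset (Fin d → ℤ) :=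
  Finset.univ.image fun s : Fin n → Fin d × Bool => pos s n

lemma sum_paths_add {p q : ℕ} (y : Fin d → ℤ) (Φ : (Fin (p + q) → Fin d × Bool) → ℝ) :
    ∑ s ∈ Finset.univ.filter (fun s : Fin (p + q) → Fin d × Bool => pos s (p + q) = y), Φ s
      = ∑ z ∈ endpoints d p,
          ∑ a ∈ Finset.univ.filter (fun a : Fin p → Fin d × Bool => pos a p = z),
            ∑ b ∈ Finset.univ.filter (fun b : Fin q → Fin d × Bool => pos b q = y - z),
              Φ (Fin.append a b) := by
  classical
  rw [Finset.sum_filter, ← (Fin.appendEquiv p q).sum_comp, Fintype.sum_prod_type,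
    ← Finset.sum_fiberwise_of_maps_to (g := fun a => pos a p) (t := endpoints d p)
      fun a _ => Finset.mem_image_of_mem _ (Finset.mem_univ a)]
  refine Finset.sum_congr rfl fun z _ => ?_
  rw [Finset.sum_filter, Finset.sum_filter]
  refine Finset.sum_congr rfl fun a _ => ?_
  split_ifs with ha
  · rw [Finset.sum_filter]
    refine Finset.sum_congr rfl fun b _ => ?_
    rw [show Fin.appendEquiv p q (a, b) = Fin.append a b from rfl, pos_append_add, ha]
    simp only [eq_sub_iff_add_eq']
  · simp

end Paths

section Decompositions

variable {Ω : Type*} {d : ℕ}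

def polymerShift (p : ℕ) (z : Fin d → ℤ) (e : ℕ × (Fin d → ℤ)) : ℕ × (Fin d → ℤ) :=
  (p + e.1, z + e.2)

lemma polymerShift_injective (p : ℕ) (z : Fin d → ℤ) : Injective (polymerShift p z) :=
  fun _ _ h => Prod.ext (by simpa [polymerShift] using congrArg Prod.fst h)
    (by simpa [polymerShift] using congrArg Prod.snd h)

def treeRoot (e : ℕ × (Fin d → ℤ)) : List (Fin d → ℤ) × ℕ × (Fin d → ℤ) := ([], e)

lemma treeRoot_injective : Injective (treeRoot (d := d)) :=
  fun _ _ h => congrArg Prod.snd h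

/-- Tree words record absolute positions, so grafting a subtree at `z` also shifts them by `z`. -/
def treeGraft (z : Fin d → ℤ) (e : List (Fin d → ℤ) × ℕ × (Fin d → ℤ)) :
    List (Fin d → ℤ) × ℕ × (Fin d → ℤ) :=
  (z :: e.1.map (z + ·), e.2)

lemma treeGraft_injective (z : Fin d → ℤ) : Injective (treeGraft z) := by
  intro e e' h
  simp only [treeGraft, Prod.mk.injEq, List.cons.injEq, true_and] at h
  exact Prod.ext (List.map_injective_iff.2 (add_right_injective z) h.1) h.2

lemma polymerEnergy_append {p q : ℕ} (env : ℕ × (Fin d → ℤ) → Ω → ℝ)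
    (a : Fin p → Fin d × Bool) (b : Fin q → Fin d × Bool) (o : Ω) :
    polymerEnergy (p + q) env (Fin.append a b) o
      = polymerEnergy p env a o
        + polymerEnergy q (fun e => env (polymerShift p (pos a p) e)) b o := by
  rw [polymerEnergy, Finset.sum_range_add]
  congr 1 <;> refine Finset.sum_congr rfl fun i hi => ?_
  · rw [pos_append_of_le a b (by simp at hi; omega)]
  · simp only [polymerShift, ← pos_append_add, add_assoc]

lemma treeWord_append {q m : ℕ} (a : Fin m → Fin d × Bool) (b : Fin q → Fin d × Bool) (l : ℕ) :
    treeWord m (Fin.append a b) (l + 1) = pos a m :: (treeWord m b l).map (pos a m + ·) := by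
  rw [treeWord, List.ofFn_succ, treeWord, List.map_ofFn]
  congr 1
  · simpa [pos_zero] using pos_append_add a b 0
  · refine congrArg _ (funext fun r => ?_)
    rw [comp_apply, ← pos_append_add, Fin.val_succ]
    congr 1
    ring

lemma treeEnergy_append {q m : ℕ} (k : ℕ) (envT : List (Fin d → ℤ) × ℕ × (Fin d → ℤ) → Ω → ℝ)
    (a : Fin m → Fin d × Bool) (b : Fin q → Fin d × Bool) (o : Ω) :
    treeEnergy (m + q) m (k + 1) envT (Fin.append a b) o
      = polymerEnergy m (fun e => envT (treeRoot e)) a o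
        + treeEnergy q m k (fun e => envT (treeGraft (pos a m) e)) b o := by
  rw [treeEnergy, Finset.sum_range_succ', add_comm, polymerEnergy, treeEnergy]
  congr 1
  · refine Finset.sum_congr rfl fun j hj => ?_
    simp only [treeWord, zero_mul, zero_add, pos_zero, sub_zero, List.ofFn_zero, treeRoot]
    rw [pos_append_of_le a b (by simp at hj; omega)]
  · refine Finset.sum_congr rfl fun l _ => Finset.sum_congr rfl fun j _ => ?_
    rw [treeWord_append, treeGraft, show (l + 1) * m = m + l * m by ring, add_assoc,
      pos_append_add, pos_append_add, add_sub_add_left_eq_sub]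

lemma ZpolPP_add (p q : ℕ) (β : ℝ) (env : ℕ × (Fin d → ℤ) → Ω → ℝ) (y : Fin d → ℤ) (o : Ω) :
    ZpolPP (p + q) β env y o = ∑ z ∈ endpoints d p,
      ZpolPP p β env z o * ZpolPP q β (fun e => env (polymerShift p z e)) (y - z) o := by
  rw [ZpolPP, sum_paths_add, Finset.mul_sum]
  refine Finset.sum_congr rfl fun z _ => ?_
  rw [ZpolPP, ZpolPP, mul_mul_mul_comm, ← pow_add, Finset.sum_mul_sum]
  congr 1
  refine Finset.sum_congr rfl fun a ha => Finset.sum_congr rfl fun b _ => ?_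
  rw [← (Finset.mem_filter.1 ha).2, polymerEnergy_append, mul_add, Real.exp_add]

lemma ZtreePP_succ (m q k : ℕ) (β : ℝ) (envT : List (Fin d → ℤ) × ℕ × (Fin d → ℤ) → Ω → ℝ)
    (y : Fin d → ℤ) (o : Ω) :
    ZtreePP (m + q) m (k + 1) β envT y o = ∑ z ∈ endpoints d m,
      ZpolPP m β (fun e => envT (treeRoot e)) z o
        * ZtreePP q m k β (fun e => envT (treeGraft z e)) (y - z) o := by
  rw [ZtreePP, sum_paths_add, Finset.mul_sum]
  refine Finset.sum_congr rfl fun z _ => ?_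
  rw [ZpolPP, ZtreePP, mul_mul_mul_comm, ← pow_add, Finset.sum_mul_sum]
  congr 1
  refine Finset.sum_congr rfl fun a ha => Finset.sum_congr rfl fun b _ => ?_
  rw [← (Finset.mem_filter.1 ha).2, treeEnergy_append, mul_add, Real.exp_add]

end Decompositions

lemma measurable_integral_exp_neg_mul {α : Type*} [MeasurableSpace α] {μ : Measure α}
    [SFinite μ] {Z : α → ℝ} (hZ : Measurable Z) :
    Measurable fun t => ∫ x, Real.exp (-t * Z x) ∂μ :=
  (Measurable.stronglyMeasurable (by fun_prop : Measurable fun p : ℝ × α =>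
    Real.exp (-p.1 * Z p.2))).integral_prod_right'.measurable

section PartitionFunctions

variable {Ω : Type*} {d n m k : ℕ} {β : ℝ}

lemma ZpolPP_nonneg (env : ℕ × (Fin d → ℤ) → Ω → ℝ) (y : Fin d → ℤ) (o : Ω) :
    0 ≤ ZpolPP n β env y o :=
  mul_nonneg (by positivity) (Finset.sum_nonneg fun _ _ => (Real.exp_pos _).le)

lemma ZtreePP_nonneg (envT : List (Fin d → ℤ) × ℕ × (Fin d → ℤ) → Ω → ℝ) (y : Fin d → ℤ)
    (o : Ω) : 0 ≤ ZtreePP n m k β envT y o :=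
  mul_nonneg (by positivity) (Finset.sum_nonneg fun _ _ => (Real.exp_pos _).le)

lemma measurable_ZpolPP [MeasurableSpace Ω] {env : ℕ × (Fin d → ℤ) → Ω → ℝ}
    (henv : ∀ e, Measurable (env e)) (y : Fin d → ℤ) : Measurable (ZpolPP n β env y) :=
  (Finset.measurable_sum _ fun _ _ => Real.measurable_exp.comp
    ((Finset.measurable_sum _ fun _ _ => henv _).const_mul β)).const_mul _

lemma measurable_ZtreePP [MeasurableSpace Ω]
    {envT : List (Fin d → ℤ) × ℕ × (Fin d → ℤ) → Ω → ℝ} (henvT : ∀ e, Measurable (envT e))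
    (y : Fin d → ℤ) : Measurable (ZtreePP n m k β envT y) :=
  (Finset.measurable_sum _ fun _ _ => Real.measurable_exp.comp
    ((Finset.measurable_sum _ fun _ _ => Finset.measurable_sum _ fun _ _ =>
      henvT _).const_mul β)).const_mul _

lemma monotone_ZpolPP [Preorder Ω] (hβ : 0 ≤ β) {env : ℕ × (Fin d → ℤ) → Ω → ℝ}
    (henv : ∀ e, Monotone (env e)) (y : Fin d → ℤ) : Monotone (ZpolPP n β env y) :=
  fun _ _ h => mul_le_mul_of_nonneg_left (Finset.sum_le_sum fun _ _ => Real.exp_le_exp.2 <|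
    mul_le_mul_of_nonneg_left (Finset.sum_le_sum fun _ _ => henv _ h) hβ) (by positivity)

lemma ZpolPP_zero_eq (env : ℕ × (Fin d → ℤ) → Ω → ℝ) (y : Fin d → ℤ) (o : Ω) :
    ZpolPP 0 β env y o = if y = 0 then 1 else 0 := by
  by_cases hy : y = 0 <;> simp [ZpolPP, polymerEnergy, pos_zero, hy, eq_comm]

lemma ZtreePP_zero_eq (envT : List (Fin d → ℤ) × ℕ × (Fin d → ℤ) → Ω → ℝ) (y : Fin d → ℤ)
    (o : Ω) : ZtreePP 0 m 0 β envT y o = if y = 0 then 1 else 0 := by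
  by_cases hy : y = 0 <;> simp [ZtreePP, treeEnergy, pos_zero, hy, eq_comm]

lemma ZpolPP_eq_eval (env : ℕ × (Fin d → ℤ) → Ω → ℝ) (y : Fin d → ℤ) (o : Ω) :
    ZpolPP n β env y o = ZpolPP n β (fun e x => x e) y fun e => env e o := by
  unfold ZpolPP polymerEnergy; rfl

lemma ZtreePP_eq_eval (envT : List (Fin d → ℤ) × ℕ × (Fin d → ℤ) → Ω → ℝ) (y : Fin d → ℤ)
    (o : Ω) : ZtreePP n m k β envT y o = ZtreePP n m k β (fun e x => x e) y fun e => envT e o := by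
  unfold ZtreePP treeEnergy; rfl

variable (d n m k)

def polymerSites : Finset (ℕ × (Fin d → ℤ)) :=
  (Finset.univ ×ˢ Finset.range n).image fun p : (Fin n → Fin d × Bool) × ℕ =>
    (p.2 + 1, pos p.1 (p.2 + 1))

def treeSites : Finset (List (Fin d → ℤ) × ℕ × (Fin d → ℤ)) :=
  (Finset.univ ×ˢ Finset.range k ×ˢ Finset.range m).image
    fun p : (Fin n → Fin d × Bool) × ℕ × ℕ => (treeWord m p.1 p.2.1,
      (p.2.2 + 1, pos p.1 (p.2.1 * m + (p.2.2 + 1)) - pos p.1 (p.2.1 * m)))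

variable {d n m k}

lemma mem_polymerSites (s : Fin n → Fin d × Bool) {i : ℕ} (hi : i ∈ Finset.range n) :
    (i + 1, pos s (i + 1)) ∈ polymerSites d n :=
  Finset.mem_image.2 ⟨(s, i), Finset.mem_product.2 ⟨Finset.mem_univ s, hi⟩, rfl⟩

lemma mem_treeSites (s : Fin n → Fin d × Bool) {l j : ℕ} (hl : l ∈ Finset.range k)
    (hj : j ∈ Finset.range m) :
    (treeWord m s l, (j + 1, pos s (l * m + (j + 1)) - pos s (l * m))) ∈ treeSites d n m k :=
  Finset.mem_image.2 ⟨(s, l, j), Finset.mem_product.2 ⟨Finset.mem_univ s,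
    Finset.mem_product.2 ⟨hl, hj⟩⟩, rfl⟩

lemma fst_mem_Icc_of_mem_polymerSites {e : ℕ × (Fin d → ℤ)} (he : e ∈ polymerSites d n) :
    e.1 ∈ Finset.Icc 1 n := by
  obtain ⟨⟨s, i⟩, hi, rfl⟩ := Finset.mem_image.1 he
  simp only [Finset.mem_product, Finset.mem_range] at hi
  simp only [Finset.mem_Icc]
  omega

lemma dependsOn_ZpolPP_comp {J : Type*} [DecidableEq J] (u : ℕ × (Fin d → ℤ) → J)
    (y : Fin d → ℤ) :
    DependsOn (ZpolPP n β (fun e (x : J → ℝ) => x (u e)) y) ((polymerSites d n).image u) :=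
  fun x x' h => by
    unfold ZpolPP polymerEnergy
    refine congrArg _ (Finset.sum_congr rfl fun s _ => congrArg _ (congrArg _ ?_))
    exact Finset.sum_congr rfl fun i hi =>
      h _ (Finset.mem_coe.2 (Finset.mem_image_of_mem u (mem_polymerSites s hi)))

lemma dependsOn_ZpolPP (y : Fin d → ℤ) :
    DependsOn (ZpolPP n β (fun e x => x e) y) (polymerSites d n) := by
  simpa using dependsOn_ZpolPP_comp (n := n) (β := β) id y

lemma dependsOn_ZtreePP_comp {J : Type*} [DecidableEq J]
    (u : List (Fin d → ℤ) × ℕ × (Fin d → ℤ) → J) (y : Fin d → ℤ) :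
    DependsOn (ZtreePP n m k β (fun e (x : J → ℝ) => x (u e)) y) ((treeSites d n m k).image u) :=
  fun x x' h => by
    unfold ZtreePP treeEnergy
    refine congrArg _ (Finset.sum_congr rfl fun s _ => congrArg _ (congrArg _ ?_))
    exact Finset.sum_congr rfl fun l hl => Finset.sum_congr rfl fun j hj =>
      h _ (Finset.mem_coe.2 (Finset.mem_image_of_mem u (mem_treeSites s hl hj)))

end PartitionFunctions

section Laplace

variable (ν : Measure ℝ) [IsProbabilityMeasure ν] {d : ℕ} {β : ℝ}

def polymerLaplace (d n : ℕ) (β : ℝ) (y : Fin d → ℤ) (t : ℝ) : ℝ :=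
  ∫ x, Real.exp (-t * ZpolPP n β (fun e x => x e) y x) ∂Measure.infinitePi fun _ => ν

def treeLaplace (d n m k : ℕ) (β : ℝ) (y : Fin d → ℤ) (t : ℝ) : ℝ :=
  ∫ x, Real.exp (-t * ZtreePP n m k β (fun e x => x e) y x) ∂Measure.infinitePi fun _ => ν

lemma measurable_treeLaplace (n m k : ℕ) (y : Fin d → ℤ) :
    Measurable (treeLaplace ν d n m k β y) :=
  measurable_integral_exp_neg_mul (measurable_ZtreePP (fun _ => measurable_pi_apply _) y)

lemma treeLaplace_mem_unitInterval (n m k : ℕ) (y : Fin d → ℤ) {t : ℝ} (ht : 0 ≤ t) :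
    treeLaplace ν d n m k β y t ∈ unitInterval :=
  integral_mem_unitInterval (Real.measurable_exp.comp
    ((measurable_ZtreePP (fun _ => measurable_pi_apply _) y).const_mul _))
    fun x => exp_neg_mul_mem_unitInterval ht (ZtreePP_nonneg _ y x)

lemma disjoint_polymerSites_biUnion (p q : ℕ) (E : Finset (Fin d → ℤ)) :
    Disjoint (polymerSites d p)
      (E.biUnion fun z => (polymerSites d q).image (polymerShift p z)) := by
  refine Finset.disjoint_left.2 fun e he he' => ?_
  obtain ⟨z, -, hz⟩ := Finset.mem_biUnion.1 he'
  obtain ⟨e', he'', rfl⟩ := Finset.mem_image.1 hz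
  have h1 := Finset.mem_Icc.1 (fst_mem_Icc_of_mem_polymerSites he)
  have h2 := Finset.mem_Icc.1 (fst_mem_Icc_of_mem_polymerSites he'')
  simp only [polymerShift] at h1
  omega

/-- `Z_{p+q}^pol(y)` with the first `p` steps in the environment `x` and the others in `x'`. -/
def ZpolPPSplit (p q : ℕ) (β : ℝ) (y : Fin d → ℤ) (x x' : ℕ × (Fin d → ℤ) → ℝ) : ℝ :=
  ∑ z ∈ endpoints d p,
    ZpolPP p β (fun e x => x e) z x * ZpolPP q β (fun e x => x (polymerShift p z e)) (y - z) x'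

lemma measurable_ZpolPPSplit (p q : ℕ) (y : Fin d → ℤ) :
    Measurable (uncurry (ZpolPPSplit (β := β) p q y)) :=
  Finset.measurable_sum _ fun z _ =>
    ((measurable_ZpolPP (fun _ => measurable_pi_apply _) z).comp measurable_fst).mul
      ((measurable_ZpolPP (fun _ => measurable_pi_apply _) _).comp measurable_snd)

lemma ZpolPPSplit_nonneg (p q : ℕ) (y : Fin d → ℤ) (x x' : ℕ × (Fin d → ℤ) → ℝ) :
    0 ≤ ZpolPPSplit p q β y x x' :=
  Finset.sum_nonneg fun z _ => mul_nonneg (ZpolPP_nonneg _ z x) (ZpolPP_nonneg _ _ x')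

lemma polymerLaplace_add_eq_integral_integral (p q : ℕ) (y : Fin d → ℤ) {t : ℝ} (ht : 0 ≤ t) :
    polymerLaplace ν d (p + q) β y t = ∫ x, ∫ x', Real.exp (-t * ZpolPPSplit p q β y x x')
      ∂Measure.infinitePi (fun _ => ν) ∂Measure.infinitePi (fun _ => ν) := by
  classical
  unfold polymerLaplace
  simp_rw [ZpolPP_add]
  refine integral_infinitePi_eq_integral_integral_of_dependsOn (fun _ => ν)
    (F := fun x x' => Real.exp (-t * ZpolPPSplit p q β y x x'))
    (disjoint_polymerSites_biUnion p q (endpoints d p)) (fun x' x₁ x₂ h => ?_)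
    (fun x x₁ x₂ h => ?_) (Real.measurable_exp.comp ((measurable_ZpolPPSplit p q y).const_mul _))
    (fun x x' => exp_neg_mul_mem_unitInterval ht (ZpolPPSplit_nonneg p q y x x'))
  · exact congrArg _ (congrArg _ (Finset.sum_congr rfl fun z _ =>
      congrArg (· * _) (dependsOn_ZpolPP z h)))
  · exact congrArg _ (congrArg _ (Finset.sum_congr rfl fun z hz =>
      congrArg (_ * ·) ((dependsOn_ZpolPP_comp (polymerShift p z) (y - z)).mono
        (fun _ he => Finset.mem_biUnion.2 ⟨z, hz, he⟩) h)))

/-- Harris' inequality for the continuations after the first `p` steps, which are all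
increasing functions of the same environment. -/
lemma prod_polymerLaplace_le_integral (hβ : 0 ≤ β) (p q : ℕ) (y : Fin d → ℤ) {t : ℝ}
    (ht : 0 ≤ t) (x : ℕ × (Fin d → ℤ) → ℝ) :
    ∏ z ∈ endpoints d p, polymerLaplace ν d q β (y - z) (t * ZpolPP p β (fun e x => x e) z x)
      ≤ ∫ x', Real.exp (-t * ZpolPPSplit p q β y x x') ∂Measure.infinitePi (fun _ => ν) := by
  classical
  set B : (Fin d → ℤ) → (ℕ × (Fin d → ℤ) → ℝ) → ℝ :=
    fun z => ZpolPP q β (fun e x => x (polymerShift p z e)) (y - z)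
  set T : Finset (ℕ × (Fin d → ℤ)) :=
    (endpoints d p).biUnion fun z => (polymerSites d q).image (polymerShift p z)
  have hc : ∀ z, 0 ≤ t * ZpolPP p β (fun e x => x e) z x :=
    fun z => mul_nonneg ht (ZpolPP_nonneg _ z x)
  have hBm : ∀ z, Measurable (B z) := fun z => measurable_ZpolPP (fun _ => measurable_pi_apply _) _
  have hlaw : ∀ z s, polymerLaplace ν d q β (y - z) s
      = ∫ x', Real.exp (-s * B z x') ∂Measure.infinitePi (fun _ => ν) := fun z s =>
    (integral_comp_infinitePi_of_injective (fun _ => ν) (polymerShift_injective p z)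
      (f := fun x => Real.exp (-s * ZpolPP q β (fun e x => x e) (y - z) x))
      (Real.measurable_exp.comp ((measurable_ZpolPP (fun _ => measurable_pi_apply _) _).const_mul
        _))).symm
  have hsplit : ∀ x', Real.exp (-t * ZpolPPSplit p q β y x x')
      = ∏ z ∈ endpoints d p, Real.exp (-(t * ZpolPP p β (fun e x => x e) z x) * B z x') :=
    fun x' => by
      rw [ZpolPPSplit, Finset.mul_sum, ← Real.exp_sum]
      exact congrArg _ (Finset.sum_congr rfl fun z _ => by ring)
  simp_rw [hlaw, hsplit]
  refine prod_integral_le_integral_prod_infinitePi _ _ (S := T) _ (fun z hz x₁ x₂ h => ?_)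
    (fun z _ => Real.measurable_exp.comp ((hBm z).const_mul _)) (fun z _ x₁ x₂ h => ?_)
    fun z _ x' => exp_neg_mul_mem_unitInterval (hc z) (ZpolPP_nonneg _ _ x')
  · refine congrArg _ (congrArg _ ((dependsOn_ZpolPP_comp (polymerShift p z) (y - z)).mono
      ?_ h))
    exact fun _ he => Finset.mem_biUnion.2 ⟨z, hz, he⟩
  · have := monotone_ZpolPP (n := q) hβ (env := fun e (x : ℕ × (Fin d → ℤ) → ℝ) =>
      x (polymerShift p z e)) (fun _ _ _ h' => by exact h' _) (y - z) h
    exact Real.exp_le_exp.2 (by nlinarith [hc z])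

lemma integral_prod_le_polymerLaplace_add (hβ : 0 ≤ β) (p q : ℕ) (y : Fin d → ℤ) {t : ℝ}
    (ht : 0 ≤ t) (φ : (Fin d → ℤ) → ℝ → ℝ) (hφm : ∀ z, Measurable (φ z))
    (hφI : ∀ z s, 0 ≤ s → φ z s ∈ unitInterval)
    (hφ : ∀ z s, 0 ≤ s → φ z s ≤ polymerLaplace ν d q β (y - z) s) :
    ∫ x, ∏ z ∈ endpoints d p, φ z (t * ZpolPP p β (fun e x => x e) z x)
        ∂Measure.infinitePi (fun _ => ν)
      ≤ polymerLaplace ν d (p + q) β y t := by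
  have hc : ∀ z (x : ℕ × (Fin d → ℤ) → ℝ), 0 ≤ t * ZpolPP p β (fun e x => x e) z x :=
    fun z x => mul_nonneg ht (ZpolPP_nonneg _ z x)
  have hFm : Measurable (uncurry fun x x' : ℕ × (Fin d → ℤ) → ℝ =>
      Real.exp (-t * ZpolPPSplit p q β y x x')) :=
    Real.measurable_exp.comp ((measurable_ZpolPPSplit p q y).const_mul _)
  have hFI : ∀ x x' : ℕ × (Fin d → ℤ) → ℝ,
      Real.exp (-t * ZpolPPSplit p q β y x x') ∈ unitInterval :=
    fun x x' => exp_neg_mul_mem_unitInterval ht (ZpolPPSplit_nonneg p q y x x')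
  have hLm : Measurable fun x : ℕ × (Fin d → ℤ) → ℝ =>
      ∏ z ∈ endpoints d p, φ z (t * ZpolPP p β (fun e x => x e) z x) :=
    Finset.measurable_prod _ fun z _ =>
      (hφm z).comp ((measurable_ZpolPP (fun _ => measurable_pi_apply _) z).const_mul t)
  have hRm : Measurable fun x : ℕ × (Fin d → ℤ) → ℝ =>
      ∫ x', Real.exp (-t * ZpolPPSplit p q β y x x') ∂Measure.infinitePi (fun _ => ν) :=
    hFm.stronglyMeasurable.integral_prod_right'.measurable
  rw [polymerLaplace_add_eq_integral_integral ν p q y ht]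
  refine integral_mono (integrable_of_mem_unitInterval hLm
      fun x => unitInterval.prod_mem fun z _ => hφI z _ (hc z x))
    (integrable_of_mem_unitInterval hRm
      fun x => integral_mem_unitInterval hFm.of_uncurry_left (hFI x))
    fun x => ?_
  exact (Finset.prod_le_prod (fun z _ => (hφI z _ (hc z x)).1) fun z _ => hφ z _ (hc z x)).trans
    (prod_polymerLaplace_le_integral ν hβ p q y ht x)

lemma disjoint_image_treeRoot_biUnion {A : Finset (ℕ × (Fin d → ℤ))} (E : Finset (Fin d → ℤ))
    (B : Finset (List (Fin d → ℤ) × ℕ × (Fin d → ℤ))) :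
    Disjoint (A.image treeRoot) (E.biUnion fun z => B.image (treeGraft z)) := by
  refine Finset.disjoint_left.2 fun e he he' => ?_
  obtain ⟨_, -, rfl⟩ := Finset.mem_image.1 he
  obtain ⟨z, -, hz⟩ := Finset.mem_biUnion.1 he'
  obtain ⟨_, -, h⟩ := Finset.mem_image.1 hz
  simp [treeGraft, treeRoot] at h

lemma pairwiseDisjoint_image_treeGraft (E : Finset (Fin d → ℤ))
    (B : Finset (List (Fin d → ℤ) × ℕ × (Fin d → ℤ))) :
    (E : Set (Fin d → ℤ)).PairwiseDisjoint fun z => B.image (treeGraft z) := by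
  intro z _ z' _ hzz'
  refine Finset.disjoint_left.2 fun e he he' => hzz' ?_
  obtain ⟨_, -, rfl⟩ := Finset.mem_image.1 he
  obtain ⟨_, -, h⟩ := Finset.mem_image.1 he'
  simp only [treeGraft, Prod.mk.injEq, List.cons.injEq] at h
  exact h.1.1.symm

/-- `Z_{p+q}^{p-tree}(y)` with the root block in the environment `x` and the others in `x'`. -/
def ZtreePPSplit (p q k : ℕ) (β : ℝ) (y : Fin d → ℤ)
    (x x' : List (Fin d → ℤ) × ℕ × (Fin d → ℤ) → ℝ) : ℝ :=
  ∑ z ∈ endpoints d p, ZpolPP p β (fun e x => x (treeRoot e)) z x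
    * ZtreePP q p k β (fun e x => x (treeGraft z e)) (y - z) x'

lemma measurable_ZtreePPSplit (p q k : ℕ) (y : Fin d → ℤ) :
    Measurable (uncurry (ZtreePPSplit (β := β) p q k y)) :=
  Finset.measurable_sum _ fun z _ =>
    ((measurable_ZpolPP (fun _ => measurable_pi_apply _) z).comp measurable_fst).mul
      ((measurable_ZtreePP (fun _ => measurable_pi_apply _) _).comp measurable_snd)

lemma ZtreePPSplit_nonneg (p q k : ℕ) (y : Fin d → ℤ)
    (x x' : List (Fin d → ℤ) × ℕ × (Fin d → ℤ) → ℝ) : 0 ≤ ZtreePPSplit p q k β y x x' :=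
  Finset.sum_nonneg fun z _ => mul_nonneg (ZpolPP_nonneg _ z x) (ZtreePP_nonneg _ _ x')

lemma treeLaplace_add_eq_integral_integral (p q k : ℕ) (y : Fin d → ℤ) {t : ℝ} (ht : 0 ≤ t) :
    treeLaplace ν d (p + q) p (k + 1) β y t
      = ∫ x, ∫ x', Real.exp (-t * ZtreePPSplit p q k β y x x')
          ∂Measure.infinitePi (fun _ => ν) ∂Measure.infinitePi (fun _ => ν) := by
  classical
  unfold treeLaplace
  simp_rw [ZtreePP_succ]
  refine integral_infinitePi_eq_integral_integral_of_dependsOn (fun _ => ν)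
    (F := fun x x' => Real.exp (-t * ZtreePPSplit p q k β y x x'))
    (disjoint_image_treeRoot_biUnion (A := polymerSites d p) (endpoints d p) (treeSites d q p k))
    (fun x' x₁ x₂ h => ?_) (fun x x₁ x₂ h => ?_)
    (Real.measurable_exp.comp ((measurable_ZtreePPSplit p q k y).const_mul _))
    (fun x x' => exp_neg_mul_mem_unitInterval ht (ZtreePPSplit_nonneg p q k y x x'))
  · exact congrArg _ (congrArg _ (Finset.sum_congr rfl fun z _ =>
      congrArg (· * _) (dependsOn_ZpolPP_comp treeRoot z h)))
  · exact congrArg _ (congrArg _ (Finset.sum_congr rfl fun z hz =>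
      congrArg (_ * ·) ((dependsOn_ZtreePP_comp (treeGraft z) (y - z)).mono
        (fun _ he => Finset.mem_biUnion.2 ⟨z, hz, he⟩) h)))

/-- The subtrees grafted at distinct endpoints of the root block read disjoint parts of the
environment, hence are independent. -/
lemma integral_exp_neg_ZtreePPSplit (p q k : ℕ) (y : Fin d → ℤ) (t : ℝ)
    (x : List (Fin d → ℤ) × ℕ × (Fin d → ℤ) → ℝ) :
    ∫ x', Real.exp (-t * ZtreePPSplit p q k β y x x') ∂Measure.infinitePi (fun _ => ν)
      = ∏ z ∈ endpoints d p,
          treeLaplace ν d q p k β (y - z) (t * ZpolPP p β (fun e x => x (treeRoot e)) z x) := by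
  classical
  have hsplit : ∀ x', Real.exp (-t * ZtreePPSplit p q k β y x x') = ∏ z ∈ endpoints d p,
      Real.exp (-(t * ZpolPP p β (fun e x => x (treeRoot e)) z x)
        * ZtreePP q p k β (fun e x => x (treeGraft z e)) (y - z) x') := fun x' => by
    rw [ZtreePPSplit, Finset.mul_sum, ← Real.exp_sum]
    exact congrArg _ (Finset.sum_congr rfl fun z _ => by ring)
  simp_rw [hsplit]
  rw [integral_finset_prod_infinitePi_of_dependsOn _ _ _
    (pairwiseDisjoint_image_treeGraft _ (treeSites d q p k))
    (fun z (x' : List (Fin d → ℤ) × ℕ × (Fin d → ℤ) → ℝ) => Real.exp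
      (-(t * ZpolPP p β (fun e x => x (treeRoot e)) z x)
        * ZtreePP q p k β (fun e x => x (treeGraft z e)) (y - z) x'))
    (fun z _ x₁ x₂ h => congrArg _ (congrArg _
      (dependsOn_ZtreePP_comp (treeGraft z) (y - z) h)))
    fun z _ => Real.measurable_exp.comp
      ((measurable_ZtreePP (fun _ => measurable_pi_apply _) _).const_mul _)]
  exact Finset.prod_congr rfl fun z _ =>
    integral_comp_infinitePi_of_injective (fun _ => ν) (treeGraft_injective z)
      (f := fun (x' : List (Fin d → ℤ) × ℕ × (Fin d → ℤ) → ℝ) => Real.exp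
        (-(t * ZpolPP p β (fun e x => x (treeRoot e)) z x)
          * ZtreePP q p k β (fun e x => x e) (y - z) x'))
      (Real.measurable_exp.comp ((measurable_ZtreePP (fun _ => measurable_pi_apply _) _).const_mul
        _))

lemma treeLaplace_add_eq_integral_prod (p q k : ℕ) (y : Fin d → ℤ) {t : ℝ} (ht : 0 ≤ t) :
    treeLaplace ν d (p + q) p (k + 1) β y t
      = ∫ x, ∏ z ∈ endpoints d p, treeLaplace ν d q p k β (y - z)
          (t * ZpolPP p β (fun e x => x e) z x) ∂Measure.infinitePi (fun _ => ν) := by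
  simp_rw [treeLaplace_add_eq_integral_integral ν p q k y ht, integral_exp_neg_ZtreePPSplit]
  exact integral_comp_infinitePi_of_injective (fun _ => ν) treeRoot_injective
    (f := fun x => ∏ z ∈ endpoints d p, treeLaplace ν d q p k β (y - z)
      (t * ZpolPP p β (fun e x => x e) z x))
    (Finset.measurable_prod _ fun z _ => (measurable_treeLaplace ν q p k _).comp
      ((measurable_ZpolPP (fun _ => measurable_pi_apply _) z).const_mul t))

lemma IID.integral_exp_neg_ZpolPP {Ω : Type*} [MeasurableSpace Ω] {μ : Measure Ω}
    {env : ℕ × (Fin d → ℤ) → Ω → ℝ} (h : IID μ env ν) (n : ℕ) (y : Fin d → ℤ) (t : ℝ) :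
    ∫ o, Real.exp (-t * ZpolPP n β env y o) ∂μ = polymerLaplace ν d n β y t := by
  simp_rw [ZpolPP_eq_eval env]
  exact h.integral_comp_eq_integral_infinitePi
    (f := fun x => Real.exp (-t * ZpolPP n β (fun e x => x e) y x))
    (Real.measurable_exp.comp ((measurable_ZpolPP (fun _ => measurable_pi_apply _) y).const_mul _))

lemma IID.integral_exp_neg_ZtreePP {Ω : Type*} [MeasurableSpace Ω] {μ : Measure Ω}
    {envT : List (Fin d → ℤ) × ℕ × (Fin d → ℤ) → Ω → ℝ} (h : IID μ envT ν) (n m k : ℕ)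
    (y : Fin d → ℤ) (t : ℝ) :
    ∫ o, Real.exp (-t * ZtreePP n m k β envT y o) ∂μ = treeLaplace ν d n m k β y t := by
  simp_rw [ZtreePP_eq_eval envT]
  exact h.integral_comp_eq_integral_infinitePi
    (f := fun x => Real.exp (-t * ZtreePP n m k β (fun e x => x e) y x))
    (Real.measurable_exp.comp ((measurable_ZtreePP (fun _ => measurable_pi_apply _) y).const_mul
      _))

end Laplace

lemma treeLaplace_le_polymerLaplace (ν : Measure ℝ) [IsProbabilityMeasure ν] {d : ℕ} {β : ℝ}
    (hβ : 0 ≤ β) (m : ℕ) : ∀ (k : ℕ) (y : Fin d → ℤ) (t : ℝ), 0 ≤ t →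
      treeLaplace ν d (k * m) m k β y t ≤ polymerLaplace ν d (k * m) β y t
  | 0, y, t, _ => by
    simp [treeLaplace, polymerLaplace, ZtreePP_zero_eq, ZpolPP_zero_eq]
  | k + 1, y, t, ht => by
    rw [show (k + 1) * m = m + k * m by ring, treeLaplace_add_eq_integral_prod ν m (k * m) k y ht]
    exact integral_prod_le_polymerLaplace_add ν hβ m (k * m) y ht _
      (fun _ => measurable_treeLaplace ν _ _ _ _)
      (fun _ _ hs => treeLaplace_mem_unitInterval ν _ _ _ _ hs)
      fun z s hs => treeLaplace_le_polymerLaplace ν hβ m k (y - z) s hs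

theorem polymerPP_le_mtreePP_laplaceOrder_general
    {Ω : Type*} [MeasurableSpace Ω] (μ : Measure Ω)
    (d m k : ℕ) (n : ℕ) (hn : n = k * m)
    (β : ℝ) (hβ : 0 < β) (ν : Measure ℝ) [IsProbabilityMeasure ν]
    (env : ℕ × (Fin d → ℤ) → Ω → ℝ) (henv : IID μ env ν)
    (envT : List (Fin d → ℤ) × ℕ × (Fin d → ℤ) → Ω → ℝ) (henvT : IID μ envT ν) :
    ∀ y : Fin d → ℤ, ∀ lam : ℝ, 0 ≤ lam →
      ∫ o, Real.exp (-lam * ZtreePP n m k β envT y o) ∂μ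
        ≤ ∫ o, Real.exp (-lam * ZpolPP n β env y o) ∂μ := by
  intro y lam hlam
  rw [henvT.integral_exp_neg_ZtreePP, henv.integral_exp_neg_ZpolPP, hn]
  exact treeLaplace_le_polymerLaplace ν hβ.le m k y lam hlam

/-- For `d, m ≥ 1`, `n = k m` and `β > 0`, if the i.i.d. environment has a
finite exponential moment, then for every endpoint `y ∈ ℤ^d` the point-to-point polymer
partition function is dominated by the point-to-point `m`-tree partition function in the
Laplace transform order: `𝔼[exp(−λ Z_n^{pol}(y))] ≥ 𝔼[exp(−λ Z_n^{m-tree}(y))]` for `λ ≥ 0`. -/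
theorem polymerPP_le_mtreePP_laplaceOrder
    {Ω : Type*} [MeasurableSpace Ω] (μ : Measure Ω) [IsProbabilityMeasure μ]
    (d m k : ℕ) (hd : 1 ≤ d) (hm : 1 ≤ m) (hk : 1 ≤ k) (n : ℕ) (hn : n = k * m)
    (β : ℝ) (hβ : 0 < β) (ν : Measure ℝ) [IsProbabilityMeasure ν]
    (env : ℕ × (Fin d → ℤ) → Ω → ℝ) (henv : IID μ env ν)
    (envT : List (Fin d → ℤ) × ℕ × (Fin d → ℤ) → Ω → ℝ) (henvT : IID μ envT ν)
    (hmom : Integrable (fun o => Real.exp (β * env (1, fun _ => 0) o)) μ) :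
    ∀ y : Fin d → ℤ, ∀ lam : ℝ, 0 ≤ lam →
      ∫ o, Real.exp (-lam * ZtreePP n m k β envT y o) ∂μ
        ≤ ∫ o, Real.exp (-lam * ZpolPP n β env y o) ∂μ :=
  polymerPP_le_mtreePP_laplaceOrder_general μ d m k n hn β hβ ν env henv envT henvT
end
end

section
/- Let X and Y be strictly positive random variables with X ≤_Lt Y. Then log X ≤_Lt log Y; equivalently, 𝔼[X^{−λ}] ≥ 𝔼[Y^{−λ}] for every λ ≥ 0. -/
/-!
Euler's Gamma integral writes a negative power as a mixture of Laplace kernels,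
`x ^ (-λ) Γ(λ) = ∫₀^∞ t ^ (λ - 1) e ^ (-t x) dt` for `x, λ > 0`.
Taking expectations and swapping the integrals (Tonelli), `𝔼[X ^ (-λ)] Γ(λ)` is an integral of
`t ↦ 𝔼[e ^ (-t X)]` against a positive weight, so the Laplace order of `X` and `Y` passes to
`𝔼[X ^ (-λ)] ≥ 𝔼[Y ^ (-λ)]`; finally `e ^ (-λ log X) = X ^ (-λ)`.
-/

open MeasureTheory Set

theorem ofReal_rpow_neg_mul_Gamma {x lam : ℝ} (hx : 0 < x) (hlam : 0 < lam) :
    ENNReal.ofReal (x ^ (-lam) * Real.Gamma lam)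
      = ∫⁻ t in Ioi (0 : ℝ), ENNReal.ofReal (t ^ (lam - 1) * Real.exp (-t * x)) := by
  simp_rw [neg_mul, mul_comm _ x]
  have hint : IntegrableOn (fun t : ℝ => t ^ (lam - 1) * Real.exp (-(x * t))) (Ioi 0) := by
    simpa using integrableOn_rpow_mul_exp_neg_mul_rpow (p := 1) (by linarith) one_pos hx
  have hnonneg : 0 ≤ᵐ[volume.restrict (Ioi (0 : ℝ))]
      fun t => t ^ (lam - 1) * Real.exp (-(x * t)) := by
    filter_upwards [ae_restrict_mem measurableSet_Ioi] with t (ht : 0 < t)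
    positivity
  rw [← ofReal_integral_eq_lintegral_ofReal hint hnonneg,
    Real.integral_rpow_mul_exp_neg_mul_Ioi hlam hx, one_div, Real.inv_rpow hx.le,
    Real.rpow_neg hx.le]

section

variable {Ω : Type*} [MeasurableSpace Ω] {μ : Measure Ω}

theorem lintegral_rpow_neg_mul_Gamma [SFinite μ] {Z : Ω → ℝ} (hZ : Measurable Z)
    (hZpos : ∀ o, 0 < Z o) {lam : ℝ} (hlam : 0 < lam) :
    (∫⁻ o, ENNReal.ofReal (Z o ^ (-lam)) ∂μ) * ENNReal.ofReal (Real.Gamma lam)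
      = ∫⁻ t in Ioi (0 : ℝ), ENNReal.ofReal (t ^ (lam - 1))
          * ∫⁻ o, ENNReal.ofReal (Real.exp (-t * Z o)) ∂μ := by
  have hkernel : Measurable fun p : Ω × ℝ =>
      ENNReal.ofReal (p.2 ^ (lam - 1) * Real.exp (-p.2 * Z p.1)) := by
    fun_prop
  calc (∫⁻ o, ENNReal.ofReal (Z o ^ (-lam)) ∂μ) * ENNReal.ofReal (Real.Gamma lam)
      = ∫⁻ o, (∫⁻ t in Ioi (0 : ℝ),
          ENNReal.ofReal (t ^ (lam - 1) * Real.exp (-t * Z o))) ∂μ := by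
        rw [← lintegral_mul_const _ (hZ.pow_const (-lam)).ennreal_ofReal]
        refine lintegral_congr fun o => ?_
        rw [← ENNReal.ofReal_mul (Real.rpow_nonneg (hZpos o).le _),
          ofReal_rpow_neg_mul_Gamma (hZpos o) hlam]
    _ = ∫⁻ t in Ioi (0 : ℝ),
          ∫⁻ o, ENNReal.ofReal (t ^ (lam - 1) * Real.exp (-t * Z o)) ∂μ :=
        lintegral_lintegral_swap hkernel.aemeasurable
    _ = _ := by
        refine setLIntegral_congr_fun measurableSet_Ioi fun t (ht : 0 < t) => ?_
        rw [← lintegral_const_mul _ (by fun_prop)]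
        simp_rw [ENNReal.ofReal_mul (Real.rpow_nonneg ht.le _)]

theorem lintegral_rpow_neg_le_of_lintegral_exp_neg_mul_le [SFinite μ] {X Y : Ω → ℝ}
    (hX : Measurable X) (hY : Measurable Y) (hXpos : ∀ o, 0 < X o) (hYpos : ∀ o, 0 < Y o)
    (hLt : ∀ t : ℝ, 0 < t → ∫⁻ o, ENNReal.ofReal (Real.exp (-t * Y o)) ∂μ
      ≤ ∫⁻ o, ENNReal.ofReal (Real.exp (-t * X o)) ∂μ)
    {lam : ℝ} (hlam : 0 ≤ lam) :
    ∫⁻ o, ENNReal.ofReal (Y o ^ (-lam)) ∂μ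
      ≤ ∫⁻ o, ENNReal.ofReal (X o ^ (-lam)) ∂μ := by
  rcases hlam.eq_or_lt with rfl | hlam
  · simp
  have hGamma : ENNReal.ofReal (Real.Gamma lam) ≠ 0 := by
    simpa using Real.Gamma_pos_of_pos hlam
  rw [← ENNReal.mul_le_mul_iff_left hGamma ENNReal.ofReal_ne_top,
    lintegral_rpow_neg_mul_Gamma hX hXpos hlam, lintegral_rpow_neg_mul_Gamma hY hYpos hlam]
  refine setLIntegral_mono' measurableSet_Ioi fun t (ht : 0 < t) => ?_
  exact mul_le_mul_right (hLt t ht) _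

theorem lintegral_ofReal_exp_neg_mul_eq [IsFiniteMeasure μ] {Z : Ω → ℝ} (hZ : Measurable Z)
    (hZ_nonneg : ∀ o, 0 ≤ Z o) {t : ℝ} (ht : 0 ≤ t) :
    ∫⁻ o, ENNReal.ofReal (Real.exp (-t * Z o)) ∂μ
      = ENNReal.ofReal (∫ o, Real.exp (-t * Z o) ∂μ) := by
  have hint : Integrable (fun o => Real.exp (-t * Z o)) μ := by
    refine .of_bound (by fun_prop) 1 (.of_forall fun o => ?_)
    rw [Real.norm_of_nonneg (Real.exp_nonneg _), Real.exp_le_one_iff]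
    nlinarith [hZ_nonneg o]
  exact (ofReal_integral_eq_lintegral_ofReal hint (.of_forall fun _ => Real.exp_nonneg _)).symm

end

/-- If `X` and `Y` are strictly positive random variables with
`X ≤_Lt Y` (i.e. `𝔼[exp(−λX)] ≥ 𝔼[exp(−λY)]` for all `λ ≥ 0`), then
`log X ≤_Lt log Y`; equivalently `𝔼[X^{−λ}] ≥ 𝔼[Y^{−λ}]` for every `λ ≥ 0`
(the expectations of these nonnegative quantities being taken in `[0,∞]`). -/
theorem log_laplaceOrder_of_laplaceOrder
    {Ω : Type*} [MeasurableSpace Ω] (μ : Measure Ω) [IsProbabilityMeasure μ]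
    (X Y : Ω → ℝ) (hX : Measurable X) (hY : Measurable Y)
    (hXpos : ∀ o, 0 < X o) (hYpos : ∀ o, 0 < Y o)
    (hLt : ∀ lam : ℝ, 0 ≤ lam →
      ∫ o, Real.exp (-lam * Y o) ∂μ ≤ ∫ o, Real.exp (-lam * X o) ∂μ) :
    ∀ lam : ℝ, 0 ≤ lam →
      (∫⁻ o, ENNReal.ofReal (Real.exp (-lam * Real.log (Y o))) ∂μ
          ≤ ∫⁻ o, ENNReal.ofReal (Real.exp (-lam * Real.log (X o))) ∂μ)
      ∧ (∫⁻ o, ENNReal.ofReal (Y o ^ (-lam)) ∂μ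
          ≤ ∫⁻ o, ENNReal.ofReal (X o ^ (-lam)) ∂μ) := by
  intro lam hlam
  have hLt_lintegral : ∀ t : ℝ, 0 < t → ∫⁻ o, ENNReal.ofReal (Real.exp (-t * Y o)) ∂μ
      ≤ ∫⁻ o, ENNReal.ofReal (Real.exp (-t * X o)) ∂μ := fun t ht => by
    rw [lintegral_ofReal_exp_neg_mul_eq hX (fun o => (hXpos o).le) ht.le,
      lintegral_ofReal_exp_neg_mul_eq hY (fun o => (hYpos o).le) ht.le]
    exact ENNReal.ofReal_le_ofReal (hLt t ht.le)
  have hrpow := lintegral_rpow_neg_le_of_lintegral_exp_neg_mul_le hX hY hXpos hYpos hLt_lintegral hlam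
  have hexp_log : ∀ {x : ℝ}, 0 < x → Real.exp (-lam * Real.log x) = x ^ (-lam) := fun hx => by
    rw [Real.rpow_def_of_pos hx, mul_comm]
  refine ⟨?_, hrpow⟩
  simpa only [hexp_log (hXpos _), hexp_log (hYpos _)] using hrpow
end

section
/- Let X and Y be strictly positive random variables with X ≤_Lt Y, and suppose log X and log Y are integrable. Then 𝔼[log X] ≤ 𝔼[log Y]. -/
/-!
By Frullani's integral, `log b - log a = ∫₀^∞ (exp (-t a) - exp (-t b)) / t dt` for positive
`a` and `b`.
Taking `a = X`, `b = Y` and integrating against `μ`, Fubini (justified because the absolute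
integrand integrates to `|log Y - log X|`) gives
`𝔼[log Y] - 𝔼[log X] = ∫₀^∞ (𝔼[exp (-t X)] - 𝔼[exp (-t Y)]) / t dt`,
and the Laplace transform order makes the integrand nonnegative.
-/

open MeasureTheory Set Real

noncomputable def expFrullani (a b t : ℝ) : ℝ := t⁻¹ * (exp (-t * a) - exp (-t * b))

lemma expFrullani_swap (a b t : ℝ) : expFrullani b a t = -expFrullani a b t := by
  unfold expFrullani; ring

lemma expFrullani_nonneg {a b t : ℝ} (ht : 0 ≤ t) (hab : a ≤ b) : 0 ≤ expFrullani a b t :=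
  mul_nonneg (inv_nonneg.2 ht) (sub_nonneg.2 (exp_le_exp.2 (by nlinarith)))

lemma expFrullani_le {a b t : ℝ} (ht : 0 < t) :
    expFrullani a b t ≤ (b - a) * exp (-a * t) := by
  have h : 1 - (b - a) * t ≤ exp (-((b - a) * t)) := by
    linarith [add_one_le_exp (-((b - a) * t))]
  have hsplit : exp (-t * b) = exp (-a * t) * exp (-((b - a) * t)) := by
    rw [← exp_add]; ring_nf
  have hcomm : exp (-t * a) = exp (-a * t) := by ring_nf
  unfold expFrullani
  rw [hcomm, hsplit, inv_mul_le_iff₀ ht]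
  nlinarith [exp_pos (-a * t)]

lemma integrableOn_expFrullani {a b : ℝ} (ha : 0 < a) (hb : 0 < b) :
    IntegrableOn (expFrullani a b) (Ioi 0) := by
  wlog hab : a ≤ b generalizing a b
  · rw [show expFrullani a b = -expFrullani b a from
      funext fun t => by rw [Pi.neg_apply, expFrullani_swap]]
    exact (this hb ha (le_of_not_ge hab)).neg
  refine ((exp_neg_integrableOn_Ioi 0 ha).const_mul (b - a)).mono' ?_ ?_
  · unfold expFrullani; fun_prop
  · filter_upwards [ae_restrict_mem measurableSet_Ioi] with t (ht : 0 < t)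
    rw [norm_of_nonneg (expFrullani_nonneg ht.le hab)]
    exact expFrullani_le ht

lemma integral_expFrullani {a b : ℝ} (ha : 0 < a) (hb : 0 < b) :
    ∫ t in Ioi 0, expFrullani a b t = log b - log a := by
  have hf : expFrullani a b = fun t => t⁻¹ • (exp (-(a * t)) - exp (-(b * t))) := by
    ext t; simp [expFrullani, mul_comm]
  have hexp : Continuous fun x : ℝ => exp (-x) := by fun_prop
  have := Frullani.integral_Ioi_eq (L := 1) (R := 0)
    (hexp.locallyIntegrable.locallyIntegrableOn _) ha hb
    ?_ ?_ (hf ▸ integrableOn_expFrullani ha hb)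
  · rw [hf, this, log_div hb.ne' ha.ne']; simp
  · simpa using ((continuous_neg.rexp).tendsto 0).mono_left nhdsWithin_le_nhds
  · exact tendsto_exp_neg_atTop_nhds_zero

lemma integral_abs_expFrullani {a b : ℝ} (ha : 0 < a) (hb : 0 < b) :
    ∫ t in Ioi 0, |expFrullani a b t| = |log b - log a| := by
  wlog hab : a ≤ b generalizing a b
  · rw [abs_sub_comm, ← this hb ha (le_of_not_ge hab)]
    simp_rw [expFrullani_swap a b, abs_neg]
  rw [abs_of_nonneg (sub_nonneg.2 (log_le_log ha hab)), ← integral_expFrullani ha hb]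
  exact setIntegral_congr_fun measurableSet_Ioi fun t ht =>
    abs_of_nonneg (expFrullani_nonneg (le_of_lt ht) hab)

section

variable {Ω : Type*} [MeasurableSpace Ω] {μ : Measure Ω} {X Y : Ω → ℝ}

lemma integrable_exp_neg_mul [IsFiniteMeasure μ] (hX : Measurable X) (hXpos : ∀ o, 0 < X o)
    {t : ℝ} (ht : 0 ≤ t) : Integrable (fun o => exp (-t * X o)) μ :=
  .of_bound (by fun_prop) 1 <| .of_forall fun o => by
    rw [norm_of_nonneg (exp_nonneg _), exp_le_one_iff]
    nlinarith [hXpos o]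

lemma integrable_expFrullani_prod [SFinite μ] (hX : Measurable X) (hY : Measurable Y)
    (hXpos : ∀ o, 0 < X o) (hYpos : ∀ o, 0 < Y o)
    (hXint : Integrable (fun o => log (X o)) μ) (hYint : Integrable (fun o => log (Y o)) μ) :
    Integrable (Function.uncurry fun o t => expFrullani (X o) (Y o) t)
      (μ.prod (volume.restrict (Ioi 0))) := by
  have hmeas : Measurable (Function.uncurry fun o t => expFrullani (X o) (Y o) t) := by
    unfold Function.uncurry expFrullani; fun_prop
  refine (integrable_prod_iff hmeas.aestronglyMeasurable).2
    ⟨.of_forall fun o => integrableOn_expFrullani (hXpos o) (hYpos o), ?_⟩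
  simp only [Function.uncurry_apply_pair, norm_eq_abs,
    integral_abs_expFrullani (hXpos _) (hYpos _)]
  exact (hYint.sub hXint).abs

theorem integral_log_sub_integral_log_eq [IsFiniteMeasure μ] (hX : Measurable X)
    (hY : Measurable Y) (hXpos : ∀ o, 0 < X o) (hYpos : ∀ o, 0 < Y o)
    (hXint : Integrable (fun o => log (X o)) μ) (hYint : Integrable (fun o => log (Y o)) μ) :
    ∫ o, log (Y o) ∂μ - ∫ o, log (X o) ∂μ =
      ∫ t in Ioi 0, t⁻¹ * (∫ o, exp (-t * X o) ∂μ - ∫ o, exp (-t * Y o) ∂μ) :=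
  calc ∫ o, log (Y o) ∂μ - ∫ o, log (X o) ∂μ
      = ∫ o, (∫ t in Ioi 0, expFrullani (X o) (Y o) t) ∂μ := by
        rw [← integral_sub hYint hXint]
        simp only [integral_expFrullani (hXpos _) (hYpos _)]
    _ = ∫ t in Ioi 0, ∫ o, expFrullani (X o) (Y o) t ∂μ :=
        integral_integral_swap (integrable_expFrullani_prod hX hY hXpos hYpos hXint hYint)
    _ = ∫ t in Ioi 0, t⁻¹ * (∫ o, exp (-t * X o) ∂μ - ∫ o, exp (-t * Y o) ∂μ) :=
        setIntegral_congr_fun measurableSet_Ioi fun t (ht : 0 < t) => by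
          rw [← integral_sub (integrable_exp_neg_mul hX hXpos ht.le)
            (integrable_exp_neg_mul hY hYpos ht.le), ← integral_const_mul]
          rfl

end

/-- If `X` and `Y` are strictly positive random variables with
`X ≤_Lt Y` (i.e. `𝔼[exp(−λX)] ≥ 𝔼[exp(−λY)]` for all `λ ≥ 0`) and `log X`, `log Y`
are integrable, then `𝔼[log X] ≤ 𝔼[log Y]`. -/
theorem expLog_le_of_laplaceOrder
    {Ω : Type*} [MeasurableSpace Ω] (μ : Measure Ω) [IsProbabilityMeasure μ]
    (X Y : Ω → ℝ) (hX : Measurable X) (hY : Measurable Y)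
    (hXpos : ∀ o, 0 < X o) (hYpos : ∀ o, 0 < Y o)
    (hLt : ∀ lam : ℝ, 0 ≤ lam →
      ∫ o, Real.exp (-lam * Y o) ∂μ ≤ ∫ o, Real.exp (-lam * X o) ∂μ)
    (hXint : Integrable (fun o => Real.log (X o)) μ)
    (hYint : Integrable (fun o => Real.log (Y o)) μ) :
    ∫ o, Real.log (X o) ∂μ ≤ ∫ o, Real.log (Y o) ∂μ := by
  rw [← sub_nonneg, integral_log_sub_integral_log_eq hX hY hXpos hYpos hXint hYint]
  exact setIntegral_nonneg measurableSet_Ioi fun t (ht : 0 < t) =>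
    mul_nonneg (inv_nonneg.2 ht.le) (sub_nonneg.2 (hLt t ht.le))
end

section
/- Let X = (X_1, …, X_n) be an associated random vector and let f_1, …, f_n : ℝ → ℝ be nonnegative nondecreasing functions such that all the expectations below are finite. Then 𝔼[∏_{i=1}^n f_i(X_i)] ≥ ∏_{i=1}^n 𝔼[f_i(X_i)]. -/
/-!
Truncate each `f i` at level `M`. For bounded functions every partial product
`∏ i ∈ s, f i (X i)` is integrable and is a coordinatewise non-decreasing function of `X`, so
association applied to `∏ i ∈ s, f i (X i)` and `f a (X a)` gives the induction step
`∏ i ∈ insert a s, 𝔼[f i (X i)] ≤ 𝔼[f a (X a)] 𝔼[∏ i ∈ s, f i (X i)] ≤ 𝔼[∏ i ∈ insert a s, f i (X i)]`.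
Truncating only decreases the right-hand side, and on the left
`𝔼[min (f i (X i)) M] → 𝔼[f i (X i)]` by dominated convergence.
-/

open MeasureTheory Finset

/-- An `ℝ^ι`-valued random vector `X` is *associated* if
`𝔼[f(X) g(X)] ≥ 𝔼[f(X)] 𝔼[g(X)]` for all coordinatewise non-decreasing
`f, g : (ι → ℝ) → ℝ` for which the expectations involved exist. -/
def IsAssociated {Ω ι : Type*} [MeasurableSpace Ω] (μ : Measure Ω) (X : ι → Ω → ℝ) : Prop :=
  ∀ f g : (ι → ℝ) → ℝ, Monotone f → Monotone g →
    Integrable (fun o => f (fun i => X i o)) μ →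
    Integrable (fun o => g (fun i => X i o)) μ →
    Integrable (fun o => f (fun i => X i o) * g (fun i => X i o)) μ →
    (∫ o, f (fun i => X i o) ∂μ) * ∫ o, g (fun i => X i o) ∂μ
      ≤ ∫ o, f (fun i => X i o) * g (fun i => X i o) ∂μ

open Filter Topology

lemma tendsto_integral_min_natCast {Ω : Type*} [MeasurableSpace Ω] {μ : Measure Ω}
    {g : Ω → ℝ} (hg : Integrable g μ) :
    Tendsto (fun M : ℕ => ∫ o, min (g o) M ∂μ) atTop (𝓝 (∫ o, g o ∂μ)) := by
  refine tendsto_integral_of_dominated_convergence (fun o => ‖g o‖)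
    (fun M => hg.aestronglyMeasurable.inf aestronglyMeasurable_const) hg.norm
    (fun M => .of_forall fun o => ?_) (.of_forall fun o => ?_)
  · rw [Real.norm_eq_abs, Real.norm_eq_abs, abs_le]
    constructor
    · exact le_min (neg_abs_le _) ((neg_nonpos.2 (abs_nonneg _)).trans M.cast_nonneg)
    · exact (min_le_left _ _).trans (le_abs_self _)
  · exact tendsto_atTop_of_eventually_const (i₀ := ⌈g o⌉₊) fun M hM =>
      min_eq_left ((Nat.le_ceil _).trans (Nat.cast_le.2 hM))

section

variable {Ω ι : Type*} [MeasurableSpace Ω] {μ : Measure Ω} {X : ι → Ω → ℝ} {f : ι → ℝ → ℝ}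

lemma monotone_prod_apply (hmono : ∀ i, Monotone (f i)) (hpos : ∀ i x, 0 ≤ f i x)
    (s : Finset ι) : Monotone fun x : ι → ℝ => ∏ i ∈ s, f i (x i) :=
  fun _ _ hxy => prod_le_prod (fun i _ => hpos i _) (fun i _ => hmono i (hxy i))

lemma integrable_prod_of_le [IsFiniteMeasure μ]
    (hmeas : ∀ i, AEStronglyMeasurable (fun o => f i (X i o)) μ) (hpos : ∀ i x, 0 ≤ f i x)
    {C : ℝ} (hC : ∀ i x, f i x ≤ C) (s : Finset ι) :
    Integrable (fun o => ∏ i ∈ s, f i (X i o)) μ := by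
  refine .of_bound (aestronglyMeasurable_fun_prod s fun i _ => hmeas i) (C ^ s.card)
    (.of_forall fun o => ?_)
  rw [Real.norm_eq_abs, abs_of_nonneg (prod_nonneg fun i _ => hpos i _)]
  exact (prod_le_prod (fun i _ => hpos i _) fun i _ => hC i _).trans_eq (prod_const C)

lemma IsAssociated.prod_integral_le_integral_prod [IsProbabilityMeasure μ]
    (hX : IsAssociated μ X) (hmono : ∀ i, Monotone (f i)) (hpos : ∀ i x, 0 ≤ f i x)
    (hint : ∀ s : Finset ι, Integrable (fun o => ∏ i ∈ s, f i (X i o)) μ) (s : Finset ι) :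
    ∏ i ∈ s, ∫ o, f i (X i o) ∂μ ≤ ∫ o, ∏ i ∈ s, f i (X i o) ∂μ := by
  classical
  induction s using Finset.induction_on with
  | empty => simp
  | @insert a s ha ih =>
    have hprod_insert : ∀ o, ∏ i ∈ insert a s, f i (X i o)
        = (∏ i ∈ s, f i (X i o)) * f a (X a o) := fun o => by
      rw [prod_insert ha, mul_comm]
    have hassoc := hX (fun x => ∏ i ∈ s, f i (x i)) (fun x => f a (x a))
      (monotone_prod_apply hmono hpos s) (fun x y hxy => hmono a (hxy a)) (hint s)
      (by simpa using hint {a}) (by simpa only [hprod_insert] using hint (insert a s))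
    calc ∏ i ∈ insert a s, ∫ o, f i (X i o) ∂μ
        = (∫ o, f a (X a o) ∂μ) * ∏ i ∈ s, ∫ o, f i (X i o) ∂μ := prod_insert ha
      _ ≤ (∫ o, f a (X a o) ∂μ) * ∫ o, ∏ i ∈ s, f i (X i o) ∂μ :=
        mul_le_mul_of_nonneg_left ih (integral_nonneg fun o => hpos a _)
      _ = (∫ o, ∏ i ∈ s, f i (X i o) ∂μ) * ∫ o, f a (X a o) ∂μ := mul_comm _ _
      _ ≤ ∫ o, ∏ i ∈ insert a s, f i (X i o) ∂μ := by simpa only [hprod_insert] using hassoc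

end

/-- If `X = (X_1, …, X_n)` is an associated random vector and
`f_1, …, f_n : ℝ → ℝ` are nonnegative nondecreasing functions such that all the
expectations involved are finite, then `𝔼[∏ f_i(X_i)] ≥ ∏ 𝔼[f_i(X_i)]`. -/
theorem prod_expectation_le_of_associated
    {Ω : Type*} [MeasurableSpace Ω] (μ : Measure Ω) [IsProbabilityMeasure μ]
    (n : ℕ) (X : Fin n → Ω → ℝ) (hX : IsAssociated μ X)
    (f : Fin n → ℝ → ℝ) (hmono : ∀ i, Monotone (f i)) (hpos : ∀ i x, 0 ≤ f i x)
    (hint : ∀ i, Integrable (fun o => f i (X i o)) μ)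
    (hprod : Integrable (fun o => ∏ i : Fin n, f i (X i o)) μ) :
    ∏ i : Fin n, ∫ o, f i (X i o) ∂μ ≤ ∫ o, ∏ i : Fin n, f i (X i o) ∂μ := by
  set g : ℕ → Fin n → ℝ → ℝ := fun M i x => min (f i x) M
  have hgpos : ∀ M i x, 0 ≤ g M i x := fun M i x => le_min (hpos i x) M.cast_nonneg
  have hgint : ∀ M s, Integrable (fun o => ∏ i ∈ s, g M i (X i o)) μ := fun M =>
    integrable_prod_of_le (fun i => (hint i).aestronglyMeasurable.inf aestronglyMeasurable_const)
      (hgpos M) (fun i x => min_le_right _ _)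
  have htrunc : ∀ M : ℕ, ∏ i, ∫ o, g M i (X i o) ∂μ ≤ ∫ o, ∏ i, f i (X i o) ∂μ := fun M =>
    (hX.prod_integral_le_integral_prod (fun i => (hmono i).min monotone_const) (hgpos M)
      (hgint M) univ).trans <|
      integral_mono (hgint M univ) hprod fun o =>
        prod_le_prod (fun i _ => hgpos M i _) (fun i _ => min_le_left _ _)
  exact le_of_tendsto' (tendsto_finsetProd _ fun i _ => tendsto_integral_min_natCast (hint i))
    htrunc
end

section
/- Let X and Y be nonnegative random variables, and let ε and ε' be exponential random variables with rate 1, with ε independent of X and ε' independent of Y. Then X ≤_Lt Y if and only if X/ε ≤_st Y/ε', i.e. if and only if ℙ(X/ε > t) ≤ ℙ(Y/ε' > t) for all t ∈ ℝ. -/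
/-!
Conditioning on `X`, the exponential law of `ε` gives, for `t > 0`,
`ℙ(X/ε > t) = ℙ(ε < X/t) = 𝔼[1 - exp(-X/t)] = 1 - 𝔼[exp(-X/t)]`,
so the survival functions of `X/ε` and `Y/ε'` on `(0, ∞)` are `1` minus the Laplace transforms
at `1/t`, and the two orders agree at every `t > 0`. For `t < 0` the right-hand survival
probability is `1` since `ε' > 0` almost surely, and `t = 0` follows by continuity from the right.
-/

open MeasureTheory ProbabilityTheory Real Set Filter

instance {r : ℝ} : NullSingletonClass (expMeasure r) :=
  ⟨fun x => withDensity_absolutelyContinuous _ _ (measure_singleton x)⟩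

lemma expMeasure_Iic_zero {r : ℝ} : expMeasure r (Iic 0) = 0 := by
  rw [← measure_congr Iio_ae_eq_Iic, expMeasure, gammaMeasure,
    withDensity_apply _ measurableSet_Iio]
  exact lintegral_exponentialPDF_of_nonpos le_rfl

lemma expMeasure_one_Iio {a : ℝ} (ha : 0 ≤ a) :
    expMeasure 1 (Iio a) = ENNReal.ofReal (1 - exp (-a)) := by
  have := isProbabilityMeasure_expMeasure one_pos
  rw [measure_congr Iio_ae_eq_Iic, ← ofReal_cdf, cdf_expMeasure_eq one_pos, if_pos ha, one_mul]

lemma exp_neg_mul_le_one {c x : ℝ} (hc : 0 ≤ c) (hx : 0 ≤ x) : exp (-c * x) ≤ 1 :=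
  exp_le_one_iff.2 (neg_mul c x ▸ neg_nonpos.2 (mul_nonneg hc hx))

section

variable {Ω : Type*} [MeasurableSpace Ω] {μ : Measure Ω}

lemma ae_pos_of_map_eq_expMeasure {e : Ω → ℝ} {r : ℝ} (he : Measurable e)
    (hlaw : μ.map e = expMeasure r) : ∀ᵐ o ∂μ, 0 < e o := by
  have : ∀ᵐ x ∂(μ.map e), 0 < x := by
    rw [hlaw, ae_iff]
    simp only [not_lt]
    exact expMeasure_Iic_zero
  exact ae_of_ae_map he.aemeasurable this

lemma integrable_exp_neg_mul_s16 [IsFiniteMeasure μ] {Z : Ω → ℝ} (hZ : Measurable Z)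
    (hZnn : ∀ o, 0 ≤ Z o) {c : ℝ} (hc : 0 ≤ c) : Integrable (fun o => exp (-c * Z o)) μ :=
  .of_bound (by fun_prop) 1 <| .of_forall fun o => by
    rw [norm_of_nonneg (exp_nonneg _)]
    exact exp_neg_mul_le_one hc (hZnn o)

lemma integral_exp_neg_mul_le_one [IsProbabilityMeasure μ] {Z : Ω → ℝ} (hZnn : ∀ o, 0 ≤ Z o)
    {c : ℝ} (hc : 0 ≤ c) : ∫ o, exp (-c * Z o) ∂μ ≤ 1 := by
  simpa using integral_mono_of_nonneg (μ := μ) (.of_forall fun o => exp_nonneg _)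
    (integrable_const (1 : ℝ)) (.of_forall fun o => exp_neg_mul_le_one hc (hZnn o))

lemma ProbabilityTheory.IndepFun.measure_lt_comp_eq_lintegral {α : Type*} [MeasurableSpace α]
    [IsFiniteMeasure μ] {Z : Ω → α} {e : Ω → ℝ} {f : α → ℝ} (hZ : Measurable Z)
    (he : Measurable e) (hf : Measurable f) (hind : IndepFun Z e μ) :
    μ {o | e o < f (Z o)} = ∫⁻ o, μ.map e (Iio (f (Z o))) ∂μ := by
  have hS : MeasurableSet {p : α × ℝ | p.2 < f p.1} :=
    measurableSet_lt measurable_snd (hf.comp measurable_fst)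
  calc μ {o | e o < f (Z o)} = μ.map (fun o => (Z o, e o)) {p | p.2 < f p.1} :=
        (Measure.map_apply (hZ.prodMk he) hS).symm
    _ = ((μ.map Z).prod (μ.map e)) {p | p.2 < f p.1} := by
        rw [hind.map_prod_eq_prod_map_map hZ.aemeasurable he.aemeasurable]
    _ = ∫⁻ o, μ.map e (Iio (f (Z o))) ∂μ := by
        rw [Measure.prod_apply hS, lintegral_map (measurable_measure_prodMk_left hS) hZ]
        rfl

lemma measure_lt_mul_eq_one_sub_integral_exp [IsProbabilityMeasure μ] {Z e : Ω → ℝ}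
    (hZ : Measurable Z) (he : Measurable e) (hZnn : ∀ o, 0 ≤ Z o)
    (hlaw : μ.map e = expMeasure 1) (hind : IndepFun Z e μ) {c : ℝ} (hc : 0 ≤ c) :
    μ {o | e o < c * Z o} = ENNReal.ofReal (1 - ∫ o, exp (-c * Z o) ∂μ) := by
  have hint := integrable_exp_neg_mul_s16 (μ := μ) hZ hZnn hc
  calc μ {o | e o < c * Z o} = ∫⁻ o, ENNReal.ofReal (1 - exp (-c * Z o)) ∂μ := by
        rw [hind.measure_lt_comp_eq_lintegral hZ he (measurable_const_mul c), hlaw]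
        refine lintegral_congr fun o => ?_
        rw [expMeasure_one_Iio (mul_nonneg hc (hZnn o)), neg_mul]
    _ = ENNReal.ofReal (∫ o, (1 - exp (-c * Z o)) ∂μ) :=
        (ofReal_integral_eq_lintegral_ofReal ((integrable_const 1).sub hint)
          (.of_forall fun o => sub_nonneg.2 (exp_neg_mul_le_one hc (hZnn o)))).symm
    _ = ENNReal.ofReal (1 - ∫ o, exp (-c * Z o) ∂μ) := by
        rw [integral_sub (integrable_const 1) hint, integral_const, probReal_univ, one_smul]

lemma measure_lt_div_eq_one_sub_integral_exp [IsProbabilityMeasure μ] {Z e : Ω → ℝ}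
    (hZ : Measurable Z) (he : Measurable e) (hZnn : ∀ o, 0 ≤ Z o)
    (hlaw : μ.map e = expMeasure 1) (hind : IndepFun Z e μ) {t : ℝ} (ht : 0 < t) :
    μ {o | t < Z o / e o} = ENNReal.ofReal (1 - ∫ o, exp (-t⁻¹ * Z o) ∂μ) := by
  rw [← measure_lt_mul_eq_one_sub_integral_exp hZ he hZnn hlaw hind (inv_nonneg.2 ht.le)]
  refine measure_congr <| eventuallyEq_set.2 ?_
  filter_upwards [ae_pos_of_map_eq_expMeasure he hlaw] with o ho
  rw [lt_div_iff₀ ho, lt_inv_mul_iff₀ ht, mul_comm]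

lemma measure_lt_le_of_forall_pos [IsProbabilityMeasure μ] {W W' : Ω → ℝ}
    (hW' : ∀ᵐ o ∂μ, 0 ≤ W' o) (h : ∀ t, 0 < t → μ {o | t < W o} ≤ μ {o | t < W' o}) (t : ℝ) :
    μ {o | t < W o} ≤ μ {o | t < W' o} := by
  rcases lt_trichotomy t 0 with ht | rfl | ht
  · have hfull : {o | t < W' o} =ᵐ[μ] univ :=
      eventuallyEq_univ.2 (hW'.mono fun o ho => ht.trans_le ho)
    rw [measure_congr hfull, measure_univ]
    exact prob_le_one
  · have hunion : {o | 0 < W o} = ⋃ n : ℕ, {o | 1 / (n + 1 : ℝ) < W o} := by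
      ext o
      simp only [mem_iUnion, mem_ofPred_eq]
      exact ⟨exists_nat_one_div_lt, fun ⟨n, hn⟩ => lt_trans (by positivity) hn⟩
    have hmono : Monotone fun n : ℕ => {o | 1 / (n + 1 : ℝ) < W o} :=
      fun m n hmn o (ho : 1 / (m + 1 : ℝ) < W o) => (Nat.one_div_le_one_div hmn).trans_lt ho
    rw [hunion, hmono.measure_iUnion]
    exact iSup_le fun n => (h _ (by positivity)).trans
      (measure_mono fun o (ho : 1 / (n + 1 : ℝ) < W' o) => lt_trans (by positivity) ho)
  · exact h t ht

end

/-- Let `X` and `Y` be nonnegative random variables, and let `ε`, `ε'` be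
rate-one exponential random variables with `ε` independent of `X` and `ε'` independent of
`Y`.  Then `X ≤_Lt Y` (i.e. `𝔼[exp(−λX)] ≥ 𝔼[exp(−λY)]` for all `λ ≥ 0`) if and only if
`X/ε ≤_st Y/ε'` (i.e. `ℙ(X/ε > t) ≤ ℙ(Y/ε' > t)` for all `t ∈ ℝ`). -/
theorem laplaceOrder_iff_div_exponential_stochOrder
    {Ω : Type*} [MeasurableSpace Ω] (μ : Measure Ω) [IsProbabilityMeasure μ]
    (X Y ε ε' : Ω → ℝ) (hX : Measurable X) (hY : Measurable Y)
    (hε : Measurable ε) (hε' : Measurable ε')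
    (hXpos : ∀ o, 0 ≤ X o) (hYpos : ∀ o, 0 ≤ Y o)
    (hεlaw : Measure.map ε μ = expMeasure 1) (hε'law : Measure.map ε' μ = expMeasure 1)
    (hindep₁ : IndepFun X ε μ) (hindep₂ : IndepFun Y ε' μ) :
    (∀ lam : ℝ, 0 ≤ lam →
        ∫ o, Real.exp (-lam * Y o) ∂μ ≤ ∫ o, Real.exp (-lam * X o) ∂μ)
      ↔ (∀ t : ℝ, μ {o | t < X o / ε o} ≤ μ {o | t < Y o / ε' o}) := by
  have hX_surv {t : ℝ} (ht : 0 < t) :=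
    measure_lt_div_eq_one_sub_integral_exp hX hε hXpos hεlaw hindep₁ ht
  have hY_surv {t : ℝ} (ht : 0 < t) :=
    measure_lt_div_eq_one_sub_integral_exp hY hε' hYpos hε'law hindep₂ ht
  constructor
  · intro h
    refine measure_lt_le_of_forall_pos ?_ fun t ht => ?_
    · filter_upwards [ae_pos_of_map_eq_expMeasure hε' hε'law] with o ho
      exact div_nonneg (hYpos o) ho.le
    · rw [hX_surv ht, hY_surv ht]
      exact ENNReal.ofReal_le_ofReal (sub_le_sub_left (h _ (inv_nonneg.2 ht.le)) 1)
  · intro h lam hlam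
    rcases hlam.eq_or_lt with rfl | hlam
    · simp
    · have hsurv := h lam⁻¹
      rw [hX_surv (inv_pos.2 hlam), hY_surv (inv_pos.2 hlam), inv_inv,
        ENNReal.ofReal_le_ofReal_iff (sub_nonneg.2 (integral_exp_neg_mul_le_one hYpos hlam.le))]
        at hsurv
      linarith
end
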